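/- arXiv:math/0411262 — 9 statements merged into one kernel-verified Lean document; each statement's English description precedes it below -/
import Mathlib

section
/- Let q be a power of a prime p and let F be an algebraically closed field of characteristic p containing 𝔽_q, complete with respect to a nonarchimedean absolute value |·|. Then for every sequence b : ℕ → F with |bₙ| → 0 as n → ∞, there exists a sequence c : ℕ → F with |cₙ| → 0 as n → ∞ such that cₙ − cₙ^q = bₙ for every n. Equivalently, the map 1 − σ is surjective on the Tate algebra F⟨t⟩, where σ(∑ aₙtⁿ) = ∑ aₙ^q tⁿ. -/
/-!
For `‖x‖ < 1` the series `c = ∑ᵢ x ^ qⁱ` converges, and since `y ↦ y ^ q` is a continuous ring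
endomorphism in characteristic `p`, `c ^ q = ∑ᵢ x ^ qⁱ⁺¹ = c - x`; the ultrametric inequality gives
`‖c‖ ≤ ‖x‖`. As `bₖ → 0`, only finitely many `bₖ` have norm `≥ 1`, and for those any root of
`X ^ q - X + bₖ` in the algebraically closed field `F` will do.
-/

open Filter Polynomial

theorem IsAlgClosed.exists_sub_pow_eq {K : Type*} [Field K] [IsAlgClosed K] {q : ℕ}
    (hq : 1 < q) (x : K) : ∃ c : K, c - c ^ q = x := by
  have hdeg : (X ^ q - (X - C x) : K[X]).degree = q := by
    rw [degree_sub_eq_left_of_degree_lt] <;> rw [degree_X_pow]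
    rw [degree_X_sub_C]
    exact_mod_cast hq
  obtain ⟨c, hc⟩ := IsAlgClosed.exists_root (X ^ q - (X - C x)) (by rw [hdeg]; norm_cast; omega)
  refine ⟨c, ?_⟩
  simp only [IsRoot, eval_sub, eval_pow, eval_X, eval_C] at hc
  linear_combination -hc

theorem exists_norm_le_sub_pow_eq_of_norm_lt_one {F : Type*} [NormedField F]
    [IsUltrametricDist F] [CompleteSpace F] {p : ℕ} [Fact p.Prime] [CharP F p] {n : ℕ}
    (hn : n ≠ 0) {x : F} (hx : ‖x‖ < 1) : ∃ c : F, ‖c‖ ≤ ‖x‖ ∧ c - c ^ p ^ n = x := by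
  have hq : 1 < p ^ n := Nat.one_lt_pow hn (Fact.out : p.Prime).one_lt
  have hbound : ∀ i, ‖x ^ (p ^ n) ^ i‖ ≤ ‖x‖ ^ i := fun i => by
    rw [norm_pow]
    exact pow_le_pow_of_le_one (norm_nonneg x) hx.le (Nat.lt_pow_self hq).le
  have hsum : HasSum (fun i => x ^ (p ^ n) ^ i) (∑' i, x ^ (p ^ n) ^ i) :=
    (Summable.of_norm_bounded (summable_geometric_of_lt_one (norm_nonneg x) hx) hbound).hasSum
  set c := ∑' i, x ^ (p ^ n) ^ i
  have hfrob : HasSum (fun i => x ^ (p ^ n) ^ (i + 1)) (c ^ p ^ n) := by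
    have := hsum.map (iterateFrobenius F p n)
      ((continuous_pow _).congr fun y => (iterateFrobenius_def p n y).symm)
    simpa only [Function.comp_def, iterateFrobenius_def, ← pow_mul, pow_succ] using this
  have hshift : HasSum (fun i => x ^ (p ^ n) ^ i) (c ^ p ^ n + x) := by
    simpa using (hasSum_nat_add_iff (f := fun i => x ^ (p ^ n) ^ i) 1).mp hfrob
  refine ⟨c, ?_, by linear_combination hsum.unique hshift⟩
  refine IsUltrametricDist.norm_tsum_le_of_forall_le_of_nonneg (norm_nonneg x) fun i => ?_
  rw [norm_pow]
  exact pow_le_of_le_one (norm_nonneg x) hx.le (pow_ne_zero i (by omega))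

theorem statement3_general
    (p n q : ℕ) [Fact p.Prime] (hn : n ≠ 0) (hq : q = p ^ n)
    (F : Type) [NormedField F] [IsUltrametricDist F] [CompleteSpace F]
    [IsAlgClosed F] [CharP F p]
    (b : ℕ → F) (hb : Filter.Tendsto (fun k => ‖b k‖) Filter.atTop (nhds 0)) :
    ∃ c : ℕ → F, Filter.Tendsto (fun k => ‖c k‖) Filter.atTop (nhds 0) ∧
      ∀ k : ℕ, c k - (c k) ^ q = b k := by
  subst hq
  have hsol (x : F) : ∃ c : F, c - c ^ p ^ n = x ∧ (‖x‖ < 1 → ‖c‖ ≤ ‖x‖) := by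
    by_cases hx : ‖x‖ < 1
    · obtain ⟨c, hcx, hc⟩ := exists_norm_le_sub_pow_eq_of_norm_lt_one hn hx
      exact ⟨c, hc, fun _ => hcx⟩
    · obtain ⟨c, hc⟩ :=
        IsAlgClosed.exists_sub_pow_eq (Nat.one_lt_pow hn (Fact.out : p.Prime).one_lt) x
      exact ⟨c, hc, (absurd · hx)⟩
  choose c hc hcb using fun k => hsol (b k)
  refine ⟨c, ?_, hc⟩
  have hsmall : ∀ᶠ k in atTop, ‖b k‖ < 1 := hb.eventually_lt_const one_pos
  exact squeeze_zero' (.of_forall fun k => norm_nonneg _) (hsmall.mono hcb) hb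

/-- Let `q = pⁿ` and let `F ⊇ 𝔽_q` be an algebraically closed field of
characteristic `p`, complete with respect to a nonarchimedean absolute value.  Then for every
sequence `b : ℕ → F` with `‖bₖ‖ → 0` there is a sequence `c : ℕ → F` with `‖cₖ‖ → 0` such that
`cₖ - cₖ^q = bₖ` for every `k`; equivalently, `1 - σ` is surjective on the Tate algebra `F⟨t⟩`,
where `σ(∑ aₖ tᵏ) = ∑ aₖ^q tᵏ`. -/
theorem statement3
    (p n q : ℕ) [Fact p.Prime] (hn : n ≠ 0) (hq : q = p ^ n)
    (F : Type) [NormedField F] [IsUltrametricDist F] [CompleteSpace F]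
    [IsAlgClosed F] [CharP F p]
    (φ : GaloisField p n →+* F)
    (b : ℕ → F) (hb : Filter.Tendsto (fun k => ‖b k‖) Filter.atTop (nhds 0)) :
    ∃ c : ℕ → F, Filter.Tendsto (fun k => ‖c k‖) Filter.atTop (nhds 0) ∧
      ∀ k : ℕ, c k - (c k) ^ q = b k :=
  statement3_general p n q hn hq F b hb
end

section
/- Let F be a field with a nonarchimedean absolute value |·|, let q ≥ 2 be an integer, and let r ≥ 1. Let Δ : ℕ → M_r(F) be a sequence of r×r matrices such that for every real ρ > 1 one has ‖Δ_ν‖·ρ^ν → 0 as ν → ∞. Suppose Φ : ℕ → F^r is a sequence of column vectors with ‖Φ_n‖ → 0 as n → ∞ which satisfies Φ_n = ∑_{ν=0}^{n} Δ_ν · Φ_{n−ν}^{[q]} for every n ≥ 0. Then for every real ρ > 1 one has ‖Φ_n‖·ρ^n → 0 as n → ∞. -/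
/-- The supremum norm of a vector: the maximum of the norms of its entries. -/
noncomputable def vecNorm {ι : Type*} [Fintype ι] {F : Type*} [Norm F] (v : ι → F) : ℝ :=
  ⨆ i, ‖v i‖

/-- The supremum norm of a matrix: the maximum of the norms of its entries. -/
noncomputable def matNorm {ι κ : Type*} [Fintype ι] [Fintype κ] {F : Type*} [Norm F]
    (M : Matrix ι κ F) : ℝ :=
  ⨆ i, ⨆ j, ‖M i j‖

section helpers

variable {ι κ : Type*} [Fintype ι] [Fintype κ] {F : Type*} [NormedField F]

lemma le_vecNorm (v : ι → F) (i : ι) : ‖v i‖ ≤ vecNorm v := by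
  unfold vecNorm
  exact le_ciSup (f := fun i => ‖v i‖) (Set.Finite.bddAbove (Set.finite_range _)) i

lemma vecNorm_nonneg [Nonempty ι] (v : ι → F) : 0 ≤ vecNorm v :=
  le_trans (norm_nonneg _) (le_vecNorm v (Classical.arbitrary ι))

lemma vecNorm_le [Nonempty ι] (v : ι → F) {a : ℝ} (h : ∀ i, ‖v i‖ ≤ a) : vecNorm v ≤ a := by
  unfold vecNorm
  exact ciSup_le h

lemma le_matNorm (M : Matrix ι κ F) (i : ι) (j : κ) : ‖M i j‖ ≤ matNorm M := by
  unfold matNorm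
  refine le_trans (le_ciSup (f := fun j => ‖M i j‖) (Set.Finite.bddAbove (Set.finite_range _)) j) ?_
  exact le_ciSup (f := fun i => ⨆ j, ‖M i j‖) (Set.Finite.bddAbove (Set.finite_range _)) i

lemma matNorm_nonneg [Nonempty ι] [Nonempty κ] (M : Matrix ι κ F) : 0 ≤ matNorm M :=
  le_trans (norm_nonneg _)
    (le_matNorm M (Classical.arbitrary ι) (Classical.arbitrary κ))

end helpers

/-- Let `F` be a field with a nonarchimedean absolute value, `q ≥ 2`, `r ≥ 1`.
Let `Δ : ℕ → M_r(F)` satisfy `‖Δ_ν‖ ρ^ν → 0` for every real `ρ > 1`.  If `Φ : ℕ → F^r` is a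
sequence of column vectors with `‖Φ_k‖ → 0` satisfying
`Φ_k = ∑_{ν=0}^{k} Δ_ν · Φ_{k-ν}^{[q]}` for all `k ≥ 0`, then `‖Φ_k‖ ρ^k → 0` for every
real `ρ > 1`. -/
theorem statement4
    (F : Type) [NormedField F] [IsUltrametricDist F]
    (q r : ℕ) (hq : 2 ≤ q) (hr : 1 ≤ r)
    (Δ : ℕ → Matrix (Fin r) (Fin r) F)
    (hΔ : ∀ ρ : ℝ, 1 < ρ →
      Filter.Tendsto (fun ν => matNorm (Δ ν) * ρ ^ ν) Filter.atTop (nhds 0))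
    (Φ : ℕ → (Fin r → F))
    (hΦ : Filter.Tendsto (fun k => vecNorm (Φ k)) Filter.atTop (nhds 0))
    (hrec : ∀ k : ℕ,
      Φ k = ∑ ν ∈ Finset.range (k + 1), (Δ ν).mulVec (fun i => (Φ (k - ν) i) ^ q)) :
    ∀ ρ : ℝ, 1 < ρ →
      Filter.Tendsto (fun k => vecNorm (Φ k) * ρ ^ k) Filter.atTop (nhds 0) := by
  have hne : Nonempty (Fin r) := ⟨⟨0, hr⟩⟩
  -- the key consequence of the recursion and the ultrametric inequality
  have key : ∀ k : ℕ, ∃ ν ∈ Finset.range (k + 1),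
      vecNorm (Φ k) ≤ matNorm (Δ ν) * vecNorm (Φ (k - ν)) ^ q := by
    intro k
    obtain ⟨i₀, hi₀⟩ := Finite.exists_max (fun i => ‖Φ k i‖)
    have h1 : vecNorm (Φ k) ≤ ‖Φ k i₀‖ := vecNorm_le _ hi₀
    have h2 : Φ k i₀ = ∑ ν ∈ Finset.range (k + 1),
        ((Δ ν).mulVec (fun i => (Φ (k - ν) i) ^ q)) i₀ := by
      conv_lhs => rw [hrec k]
      simp [Finset.sum_apply]
    obtain ⟨ν, hν, hle⟩ := IsUltrametricDist.exists_norm_finset_sum_le_of_nonempty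
      (t := Finset.range (k + 1)) ⟨0, by simp⟩
      (fun ν => ((Δ ν).mulVec (fun i => (Φ (k - ν) i) ^ q)) i₀)
    refine ⟨ν, hν, ?_⟩
    have h3 : ‖((Δ ν).mulVec (fun i => (Φ (k - ν) i) ^ q)) i₀‖
        ≤ matNorm (Δ ν) * vecNorm (Φ (k - ν)) ^ q := by
      have : ((Δ ν).mulVec (fun i => (Φ (k - ν) i) ^ q)) i₀
          = ∑ j, Δ ν i₀ j * (Φ (k - ν) j) ^ q := by
        simp [Matrix.mulVec, dotProduct]
      rw [this]
      refine IsUltrametricDist.norm_sum_le_of_forall_le_of_nonneg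
        (mul_nonneg (matNorm_nonneg _) (pow_nonneg (vecNorm_nonneg _) q)) ?_
      intro j _
      rw [norm_mul, norm_pow]
      exact mul_le_mul (le_matNorm _ _ _)
        (pow_le_pow_left₀ (norm_nonneg _) (le_vecNorm _ _) q)
        (by positivity) (matNorm_nonneg _)
    calc vecNorm (Φ k) ≤ ‖Φ k i₀‖ := h1
      _ = ‖∑ ν ∈ Finset.range (k + 1),
            ((Δ ν).mulVec (fun i => (Φ (k - ν) i) ^ q)) i₀‖ := by rw [← h2]
      _ ≤ _ := hle
      _ ≤ _ := h3
  -- the main claim, with an arbitrary geometric rate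
  have claim : ∀ P : ℝ, 1 < P → ∃ K > 0, ∀ n : ℕ,
      vecNorm (Φ n) ≤ K * P ^ (-(n : ℤ)) := by
    intro P hP
    have hP0 : (0 : ℝ) < P := lt_trans one_pos hP
    set σ : ℝ := P * P with hσdef
    have hσ : 1 < σ := one_lt_mul_of_lt_of_le hP (le_of_lt hP)
    have hσ0 : (0 : ℝ) < σ := lt_trans one_pos hσ
    -- bound on Δ
    obtain ⟨C₀, hC₀⟩ := (hΔ σ hσ).bddAbove_range
    set C : ℝ := max C₀ 1 with hCdef
    have hC1 : (1 : ℝ) ≤ C := le_max_right _ _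
    have hC0 : (0 : ℝ) < C := lt_of_lt_of_le one_pos hC1
    have hD : ∀ ν : ℕ, matNorm (Δ ν) ≤ C * σ ^ (-(ν : ℤ)) := by
      intro ν
      have h := le_trans (hC₀ (Set.mem_range_self ν)) (le_max_left C₀ 1)
      have hσν : (0 : ℝ) < σ ^ ν := pow_pos hσ0 ν
      rw [zpow_neg, zpow_natCast]
      have h2 := (le_div_iff₀ hσν).mpr h
      simpa [div_eq_mul_inv] using h2
    -- bound on Φ
    obtain ⟨B₀, hB₀⟩ := hΦ.bddAbove_range
    set B : ℝ := max B₀ 1 with hBdef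
    have hB1 : (1 : ℝ) ≤ B := le_max_right _ _
    have hB0 : (0 : ℝ) < B := lt_of_lt_of_le one_pos hB1
    have hB : ∀ n, vecNorm (Φ n) ≤ B := fun n =>
      le_trans (hB₀ (Set.mem_range_self n)) (le_max_left _ _)
    -- smallness threshold
    set δ : ℝ := min 1 (1 / (2 * C)) with hδdef
    have hδ0 : (0 : ℝ) < δ := lt_min one_pos (by positivity)
    have hδ1 : δ ≤ 1 := min_le_left _ _
    have hCδ : C * δ ≤ 1 / 2 := by
      have : δ ≤ 1 / (2 * C) := min_le_right _ _
      calc C * δ ≤ C * (1 / (2 * C)) := by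
            exact mul_le_mul_of_nonneg_left this (le_of_lt hC0)
        _ = 1 / 2 := by field_simp
    obtain ⟨N₀, hN₀⟩ := Filter.eventually_atTop.mp (hΦ.eventually_lt_const hδ0)
    have hN₀' : ∀ m, N₀ ≤ m → vecNorm (Φ m) ≤ δ := fun m hm => le_of_lt (hN₀ m hm)
    -- the constant
    refine ⟨C * B ^ q * P ^ (2 * N₀), by positivity, ?_⟩
    set K : ℝ := C * B ^ q * P ^ (2 * N₀) with hKdef
    have hK0 : (0 : ℝ) < K := by positivity
    -- monotonicity helper for zpow
    have hmono : ∀ a b : ℤ, a ≤ b → P ^ a ≤ P ^ b := fun a b hab =>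
      zpow_le_zpow_right₀ (le_of_lt hP) hab
    have hKbig : ∀ n : ℕ, n ≤ 2 * N₀ → B ≤ K * P ^ (-(n : ℤ)) := by
      intro n hn
      have h1 : (1 : ℝ) ≤ P ^ (2 * N₀) * P ^ (-(n : ℤ)) := by
        have : P ^ ((2 * N₀ : ℕ) : ℤ) * P ^ (-(n : ℤ)) = P ^ (((2 * N₀ : ℕ) : ℤ) - n) := by
          rw [← zpow_add₀ (ne_of_gt hP0)]; ring_nf
        rw [← zpow_natCast P (2 * N₀), this]
        have : (0 : ℤ) ≤ ((2 * N₀ : ℕ) : ℤ) - n := by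
          have : (n : ℤ) ≤ ((2 * N₀ : ℕ) : ℤ) := by exact_mod_cast hn
          omega
        calc (1 : ℝ) = P ^ (0 : ℤ) := by simp
          _ ≤ _ := hmono _ _ this
      have hBq : B ≤ C * B ^ q := by
        calc B = 1 * B := (one_mul B).symm
          _ ≤ C * B ^ q := by
            refine mul_le_mul hC1 (le_self_pow₀ hB1 ?_) (le_of_lt hB0) (le_of_lt hC0)
            omega
      calc B = B * 1 := (mul_one B).symm
        _ ≤ (C * B ^ q) * (P ^ (2 * N₀) * P ^ (-(n : ℤ))) := by
            refine mul_le_mul hBq h1 zero_le_one (by positivity)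
        _ = K * P ^ (-(n : ℤ)) := by rw [hKdef]; ring
    intro n
    induction n using Nat.strong_induction_on with
    | _ n IH =>
      by_cases hn : n < N₀
      · exact le_trans (hB n) (hKbig n (by omega))
      push_neg at hn
      obtain ⟨ν, hνmem, hνle⟩ := key n
      have hνn : ν ≤ n := by
        have := Finset.mem_range.mp hνmem; omega
      by_cases hcase : n - ν < N₀
      · -- tail case: ν large
        have hν1 : n < ν + N₀ := by omega
        have hbound : matNorm (Δ ν) * vecNorm (Φ (n - ν)) ^ q
            ≤ C * σ ^ (-(ν : ℤ)) * B ^ q := by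
          refine mul_le_mul (hD ν) (pow_le_pow_left₀ (vecNorm_nonneg _) (hB _) q)
            (pow_nonneg (vecNorm_nonneg _) q)
            (mul_nonneg (le_of_lt hC0) (le_of_lt (zpow_pos hσ0 _)))
        refine le_trans hνle (le_trans hbound ?_)
        have hσz : σ ^ (-(ν : ℤ)) = P ^ (-(2 * ν : ℤ)) := by
          have h2 : σ = P ^ (2 : ℤ) := by rw [hσdef, zpow_two]
          rw [h2, ← zpow_mul]
          congr 1
          ring
        have hineq : P ^ (-(2 * ν : ℤ)) ≤ P ^ (2 * N₀) * P ^ (-(n : ℤ)) := by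
          rw [← zpow_natCast P (2 * N₀), ← zpow_add₀ (ne_of_gt hP0)]
          refine hmono _ _ ?_
          push_cast
          omega
        calc C * σ ^ (-(ν : ℤ)) * B ^ q = C * B ^ q * P ^ (-(2 * ν : ℤ)) := by
              rw [hσz]; ring
          _ ≤ C * B ^ q * (P ^ (2 * N₀) * P ^ (-(n : ℤ))) := by
              refine mul_le_mul_of_nonneg_left hineq (by positivity)
          _ = K * P ^ (-(n : ℤ)) := by rw [hKdef]; ring
      push_neg at hcase
      -- now vecNorm (Φ (n-ν)) ≤ δ
      have hsmall : vecNorm (Φ (n - ν)) ≤ δ := hN₀' _ hcase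
      have hpowq : vecNorm (Φ (n - ν)) ^ q ≤ δ ^ (q - 1) * vecNorm (Φ (n - ν)) := by
        have hv0 : 0 ≤ vecNorm (Φ (n - ν)) := vecNorm_nonneg _
        calc vecNorm (Φ (n - ν)) ^ q
            = vecNorm (Φ (n - ν)) ^ (q - 1) * vecNorm (Φ (n - ν)) := by
              rw [← pow_succ]; congr 1; omega
          _ ≤ δ ^ (q - 1) * vecNorm (Φ (n - ν)) :=
              mul_le_mul_of_nonneg_right (pow_le_pow_left₀ hv0 hsmall _) hv0
      have hδq : C * δ ^ (q - 1) ≤ 1 / 2 := by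
        refine le_trans ?_ hCδ
        refine mul_le_mul_of_nonneg_left ?_ (le_of_lt hC0)
        exact pow_le_of_le_one (le_of_lt hδ0) hδ1 (by omega)
      rcases Nat.eq_zero_or_pos ν with hν0 | hνpos
      · -- ν = 0 : contraction forces vecNorm (Φ n) = 0
        subst hν0
        have hv0 : 0 ≤ vecNorm (Φ n) := vecNorm_nonneg _
        have hD0 : matNorm (Δ 0) ≤ C := by simpa using hD 0
        simp only [Nat.sub_zero] at hpowq hνle
        have h0 : vecNorm (Φ n) ≤ C * (δ ^ (q - 1) * vecNorm (Φ n)) :=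
          le_trans hνle (mul_le_mul hD0 hpowq (pow_nonneg hv0 q) (le_of_lt hC0))
        have hhalf : C * (δ ^ (q - 1) * vecNorm (Φ n)) ≤ (1 / 2) * vecNorm (Φ n) := by
          rw [← mul_assoc]
          exact mul_le_mul_of_nonneg_right hδq hv0
        have hzero : vecNorm (Φ n) ≤ 0 := by linarith [le_trans h0 hhalf]
        exact le_trans hzero (le_of_lt (mul_pos hK0 (zpow_pos hP0 _)))
      · -- ν ≥ 1 : use the induction hypothesis at n - ν
        have hIH : vecNorm (Φ (n - ν)) ≤ K * P ^ (-((n - ν : ℕ) : ℤ)) :=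
          IH (n - ν) (by omega)
        have step : matNorm (Δ ν) * vecNorm (Φ (n - ν)) ^ q
            ≤ (C * δ ^ (q - 1)) * K * (σ ^ (-(ν : ℤ)) * P ^ (-((n - ν : ℕ) : ℤ))) := by
          calc matNorm (Δ ν) * vecNorm (Φ (n - ν)) ^ q
              ≤ (C * σ ^ (-(ν : ℤ))) * (δ ^ (q - 1) * (K * P ^ (-((n - ν : ℕ) : ℤ)))) := by
                refine mul_le_mul (hD ν) (le_trans hpowq ?_)
                  (pow_nonneg (vecNorm_nonneg _) q)
                  (mul_nonneg (le_of_lt hC0) (le_of_lt (zpow_pos hσ0 _)))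
                exact mul_le_mul_of_nonneg_left hIH (pow_nonneg (le_of_lt hδ0) _)
            _ = (C * δ ^ (q - 1)) * K * (σ ^ (-(ν : ℤ)) * P ^ (-((n - ν : ℕ) : ℤ))) := by ring
        refine le_trans hνle (le_trans step ?_)
        have hσz : σ ^ (-(ν : ℤ)) = P ^ (-(2 * ν : ℤ)) := by
          have h2 : σ = P ^ (2 : ℤ) := by rw [hσdef, zpow_two]
          rw [h2, ← zpow_mul]
          congr 1
          ring
        have hexp : σ ^ (-(ν : ℤ)) * P ^ (-((n - ν : ℕ) : ℤ)) ≤ P ^ (-(n : ℤ)) := by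
          rw [hσz, ← zpow_add₀ (ne_of_gt hP0)]
          refine hmono _ _ ?_
          have : ((n - ν : ℕ) : ℤ) = (n : ℤ) - ν := by
            exact_mod_cast Int.ofNat_sub hνn
          rw [this]
          omega
        have hcoef : (C * δ ^ (q - 1)) * K ≤ K := by
          calc (C * δ ^ (q - 1)) * K ≤ (1 / 2) * K :=
                mul_le_mul_of_nonneg_right hδq (le_of_lt hK0)
            _ ≤ K := by linarith
        exact mul_le_mul hcoef hexp
          (mul_nonneg (le_of_lt (zpow_pos hσ0 _)) (le_of_lt (zpow_pos hP0 _)))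
          (le_of_lt hK0)
  -- conclude
  intro ρ hρ
  have hρ0 : (0 : ℝ) < ρ := lt_trans one_pos hρ
  obtain ⟨K, hK0, hK⟩ := claim (ρ * ρ) (one_lt_mul_of_lt_of_le hρ (le_of_lt hρ))
  have hbound : ∀ n : ℕ, vecNorm (Φ n) * ρ ^ n ≤ K * ρ⁻¹ ^ n := by
    intro n
    have h1 : vecNorm (Φ n) * ρ ^ n ≤ (K * (ρ * ρ) ^ (-(n : ℤ))) * ρ ^ n := by
      exact mul_le_mul_of_nonneg_right (hK n) (by positivity)
    refine le_trans h1 (le_of_eq ?_)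
    have hρn : ρ ^ n ≠ 0 := pow_ne_zero n (ne_of_gt hρ0)
    rw [zpow_neg, zpow_natCast, mul_pow, inv_pow]
    field_simp
  refine squeeze_zero (fun n => ?_) hbound ?_
  · exact mul_nonneg (vecNorm_nonneg _) (pow_nonneg (le_of_lt hρ0) n)
  · have : Filter.Tendsto (fun n : ℕ => ρ⁻¹ ^ n) Filter.atTop (nhds 0) := by
      refine tendsto_pow_atTop_nhds_zero_of_lt_one (by positivity) ?_
      rw [inv_lt_one_iff₀]; right; exact hρ
    simpa using this.const_mul K
end

section
/- Let q be a power of a prime p and let F be a field of characteristic p containing 𝔽_q, complete with respect to a nonarchimedean absolute value |·|. Let α ∈ F with |α| < 1. Then the series x := ∑_{ν=0}^{∞} α^{q^ν} converges in F, it satisfies x − x^q = α and |x| = |α|, and x is the unique element of F with x − x^q = α and |x| < 1. -/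
/-!
Since `‖α‖ < 1` and `q ≥ 2`, the terms `α ^ q ^ ν` tend to `0`, so the series converges in the
complete nonarchimedean field `F`, and each term has norm at most `‖α‖`. The `q`-power map is
additive (a power of Frobenius) and continuous, so it maps the sum `x` to the shifted sum, whence
`x ^ q = x - α`. On the open unit ball `‖x ^ q‖ < ‖x‖` unless `x = 0`, so `‖x - x ^ q‖ = ‖x‖`
there; applied to `x` this gives `‖x‖ = ‖α‖`, and applied to the difference of two solutions
(again a solution of `z - z ^ q = 0`, by additivity of Frobenius) it gives uniqueness.
-/

section Ultrametric

variable {F : Type*} [NormedField F] [IsUltrametricDist F]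

lemma norm_sub_pow_eq_norm_of_norm_lt_one {x : F} (hx : ‖x‖ < 1) {q : ℕ} (hq : 1 < q) :
    ‖x - x ^ q‖ = ‖x‖ := by
  rcases eq_or_ne x 0 with rfl | hx0
  · simp [zero_pow (by omega : q ≠ 0)]
  have hlt : ‖-x ^ q‖ < ‖x‖ := by
    simpa [norm_pow] using pow_lt_pow_right_of_lt_one₀ (norm_pos_iff.2 hx0) hx hq
  rw [sub_eq_add_neg, IsUltrametricDist.norm_add_eq_max_of_norm_ne_norm hlt.ne',
    max_eq_left hlt.le]

lemma eq_of_sub_pow_eq_sub_pow_of_norm_lt_one (p n : ℕ) [ExpChar F p] (hq : 1 < p ^ n)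
    {x y : F} (hx : ‖x‖ < 1) (hy : ‖y‖ < 1) (h : x - x ^ p ^ n = y - y ^ p ^ n) : x = y := by
  have hxy : ‖x - y‖ < 1 := by
    rw [sub_eq_add_neg]
    exact (IsUltrametricDist.norm_add_le_max _ _).trans_lt (max_lt hx (by rwa [norm_neg]))
  have hfrob : (x - y) - (x - y) ^ p ^ n = 0 := by
    rw [sub_pow_expChar_pow]
    linear_combination h
  rw [← sub_eq_zero, ← norm_eq_zero, ← norm_sub_pow_eq_norm_of_norm_lt_one hxy hq, hfrob,
    norm_zero]

variable {α : F}

lemma norm_tsum_pow_pow_le (hα : ‖α‖ < 1) {q : ℕ} (hq : 0 < q) :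
    ‖∑' ν : ℕ, α ^ q ^ ν‖ ≤ ‖α‖ := by
  refine IsUltrametricDist.norm_tsum_le_of_forall_le_of_nonneg (norm_nonneg _) fun ν ↦ ?_
  rw [norm_pow]
  exact pow_le_of_le_one (norm_nonneg _) hα.le (pow_pos hq ν).ne'

variable [CompleteSpace F]

lemma summable_pow_pow (hα : ‖α‖ < 1) {q : ℕ} (hq : 1 < q) : Summable fun ν : ℕ ↦ α ^ q ^ ν := by
  refine NonarchimedeanAddGroup.summable_of_tendsto_cofinite_zero ?_
  rw [Nat.cofinite_eq_atTop, tendsto_zero_iff_norm_tendsto_zero]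
  simp only [norm_pow]
  exact (tendsto_pow_atTop_nhds_zero_of_lt_one (norm_nonneg _) hα).comp
    (tendsto_pow_atTop_atTop_of_one_lt hq)

lemma tsum_pow_pow_sub_pow (p n : ℕ) [ExpChar F p] (hα : ‖α‖ < 1) (hq : 1 < p ^ n) :
    (∑' ν : ℕ, α ^ (p ^ n) ^ ν) - (∑' ν : ℕ, α ^ (p ^ n) ^ ν) ^ p ^ n = α := by
  have hsum := summable_pow_pow hα hq
  have hfrob : (∑' ν : ℕ, α ^ (p ^ n) ^ ν) ^ p ^ n = ∑' ν : ℕ, α ^ (p ^ n) ^ (ν + 1) := by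
    rw [← iterateFrobenius_def p n,
      ← (hsum.hasSum.map (iterateFrobenius F p n) (continuous_pow _)).tsum_eq]
    exact tsum_congr fun ν ↦ by rw [Function.comp_apply, iterateFrobenius_def, ← pow_mul, pow_succ]
  rw [hfrob, hsum.tsum_eq_zero_add, pow_zero, pow_one, add_sub_cancel_right]

end Ultrametric

theorem statement7_general
    (p n q : ℕ) [Fact p.Prime] (hn : n ≠ 0) (hq : q = p ^ n)
    (F : Type) [NormedField F] [IsUltrametricDist F] [CompleteSpace F] [CharP F p]
    (α : F) (hα : ‖α‖ < 1) :
    ∃ x : F,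
      Filter.Tendsto (fun N => ∑ ν ∈ Finset.range N, α ^ q ^ ν) Filter.atTop (nhds x) ∧
      x - x ^ q = α ∧ ‖x‖ = ‖α‖ ∧
      ∀ y : F, y - y ^ q = α → ‖y‖ < 1 → y = x := by
  subst hq
  have hq : 1 < p ^ n := Nat.one_lt_pow hn (Fact.out : p.Prime).one_lt
  have hx : ‖∑' ν : ℕ, α ^ (p ^ n) ^ ν‖ < 1 :=
    (norm_tsum_pow_pow_le hα (by omega)).trans_lt hα
  have hsol := tsum_pow_pow_sub_pow p n hα hq
  refine ⟨_, (summable_pow_pow hα hq).hasSum.tendsto_sum_nat, hsol, ?_, fun y hy hy1 ↦ ?_⟩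
  · rw [← norm_sub_pow_eq_norm_of_norm_lt_one hx hq, hsol]
  · exact eq_of_sub_pow_eq_sub_pow_of_norm_lt_one p n hq hy1 hx (hy.trans hsol.symm)

/-- Let `q = pⁿ` and let `F ⊇ 𝔽_q` be a field of characteristic `p`, complete
with respect to a nonarchimedean absolute value.  Let `α ∈ F` with `|α| < 1`.  Then the series
`x = ∑_ν α^{q^ν}` converges in `F`, it satisfies `x - x^q = α` and `|x| = |α|`, and `x` is the
unique element with `x - x^q = α` and `|x| < 1`. -/
theorem statement7
    (p n q : ℕ) [Fact p.Prime] (hn : n ≠ 0) (hq : q = p ^ n)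
    (F : Type) [NormedField F] [IsUltrametricDist F] [CompleteSpace F] [CharP F p]
    (φ : GaloisField p n →+* F)
    (α : F) (hα : ‖α‖ < 1) :
    ∃ x : F,
      Filter.Tendsto (fun N => ∑ ν ∈ Finset.range N, α ^ q ^ ν) Filter.atTop (nhds x) ∧
      x - x ^ q = α ∧ ‖x‖ = ‖α‖ ∧
      ∀ y : F, y - y ^ q = α → ‖y‖ < 1 → y = x :=
  statement7_general p n q hn hq F α hα
end

section
/- Let q be a power of a prime p and let B be a commutative 𝔽_q-algebra. Let d ≥ 1, let α ∈ B be such that α^{q^j} − α is a unit of B for every j ≥ 1, let N₁, N₂ ∈ M_d(B) be nilpotent matrices, let e₀ ∈ M_d(B) satisfy N₁·e₀ = e₀·N₂, and let a_k ∈ M_d(B) for k ≥ 1 be arbitrary matrices. Then there exists a unique sequence (e_j)_{j≥0} of matrices in M_d(B), starting with the given e₀, such that for every j ≥ 1: e_j·(α^{q^j}·Id + N₂^{[q^j]}) = (α·Id + N₁)·e_j + ∑_{k=1}^{j} a_k · (e_{j−k})^{[q^k]}. -/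
noncomputable def seqAux {M : Type*} (e₀ : M) (F : (j : ℕ) → (Fin j → M) → M) : ℕ → M
  | 0 => e₀
  | (j+1) => F (j+1) (fun i => seqAux e₀ F i.val)
  decreasing_by exact i.isLt

theorem sylvester {B : Type} [CommRing B] {d : ℕ} (c : B) (hc : IsUnit c)
    (M₁ M₂ : Matrix (Fin d) (Fin d) B) (h₁ : IsNilpotent M₁) (h₂ : IsNilpotent M₂)
    (r : Matrix (Fin d) (Fin d) B) :
    ∃! X : Matrix (Fin d) (Fin d) B, c • X + (X * M₂ - M₁ * X) = r := by
  set f : Module.End B (Matrix (Fin d) (Fin d) B) :=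
    c • (1 : Module.End B (Matrix (Fin d) (Fin d) B)) +
      (LinearMap.mulRight B M₂ - LinearMap.mulLeft B M₁) with hf
  have hnil : IsNilpotent (LinearMap.mulRight B M₂ - LinearMap.mulLeft B M₁) := by
    refine Commute.isNilpotent_sub (LinearMap.commute_mulLeft_right (R := B) M₁ M₂).symm ?_ ?_
    · exact (LinearMap.isNilpotent_mulRight_iff B M₂).mpr h₂
    · exact (LinearMap.isNilpotent_mulLeft_iff B M₁).mpr h₁
  have hcu : IsUnit (c • (1 : Module.End B (Matrix (Fin d) (Fin d) B))) := by
    have := hc.map (algebraMap B (Module.End B (Matrix (Fin d) (Fin d) B)))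
    rwa [Module.algebraMap_end_eq_smul_id] at this
  have hu : IsUnit f :=
    IsNilpotent.isUnit_add_left_of_commute hnil hcu
      (((Commute.one_right _)).smul_right c)
  have hbij : Function.Bijective f := (Module.End.isUnit_iff f).mp hu
  have hfX : ∀ X : Matrix (Fin d) (Fin d) B, f X = c • X + (X * M₂ - M₁ * X) := by
    intro X
    simp [hf, LinearMap.add_apply, LinearMap.sub_apply, LinearMap.smul_apply,
      LinearMap.mulRight_apply, LinearMap.mulLeft_apply]
  obtain ⟨X, hX⟩ := hbij.surjective r
  refine ⟨X, ?_, fun Y hY => hbij.injective ?_⟩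
  · show c • X + (X * M₂ - M₁ * X) = r
    rw [← hfX]; exact hX
  · have hY' : c • Y + (Y * M₂ - M₁ * Y) = r := hY
    rw [hfX, hfX, hY', ← hX, hfX]

/-- Let `q = pⁿ` and let `B` be a commutative `𝔽_q`-algebra.  Let `α ∈ B` be
such that `α^{q^j} - α` is a unit for every `j ≥ 1`, let `N₁, N₂ ∈ M_d(B)` be nilpotent, let
`e₀ ∈ M_d(B)` satisfy `N₁ e₀ = e₀ N₂`, and let `a_k ∈ M_d(B)` (`k ≥ 1`) be arbitrary.  Then
there is a unique sequence `(e_j)` starting with the given `e₀` such that for every `j ≥ 1`: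
`e_j (α^{q^j} Id + N₂^{[q^j]}) = (α Id + N₁) e_j + ∑_{k=1}^{j} a_k (e_{j-k})^{[q^k]}`. -/
theorem statement9
    (p n q : ℕ) [Fact p.Prime] (hn : n ≠ 0) (hq : q = p ^ n)
    (B : Type) [CommRing B] [Algebra (GaloisField p n) B]
    (d : ℕ) (hd : 1 ≤ d)
    (α : B) (hα : ∀ j : ℕ, 1 ≤ j → IsUnit (α ^ q ^ j - α))
    (N₁ N₂ : Matrix (Fin d) (Fin d) B) (h₁ : IsNilpotent N₁) (h₂ : IsNilpotent N₂)
    (e₀ : Matrix (Fin d) (Fin d) B) (he₀ : N₁ * e₀ = e₀ * N₂)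
    (a : ℕ → Matrix (Fin d) (Fin d) B) :
    ∃! e : ℕ → Matrix (Fin d) (Fin d) B,
      e 0 = e₀ ∧
      ∀ j : ℕ, 1 ≤ j →
        e j * ((α ^ q ^ j) • (1 : Matrix (Fin d) (Fin d) B) + N₂.map (· ^ q ^ j))
          = (α • (1 : Matrix (Fin d) (Fin d) B) + N₁) * e j +
              ∑ k ∈ Finset.Icc 1 j, a k * (e (j - k)).map (· ^ q ^ k) := by
  classical
  rcases subsingleton_or_nontrivial B with hB | hB
  · -- trivial ring: everything is equal
    have : Subsingleton (Matrix (Fin d) (Fin d) B) := by infer_instance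
    refine ⟨fun _ => e₀, ⟨rfl, fun j hj => Subsingleton.elim _ _⟩,
      fun y _ => funext fun j => Subsingleton.elim _ _⟩
  -- characteristic p
  haveI : CharP B p :=
    charP_of_injective_algebraMap (algebraMap (GaloisField p n) B).injective p
  haveI : ExpChar B p := ExpChar.prime (Fact.out)
  have hmapnil : ∀ k : ℕ, IsNilpotent (N₂.map (· ^ q ^ k)) := by
    intro k
    have hEq : N₂.map (· ^ q ^ k) = (iterateFrobenius B p (n * k)).mapMatrix N₂ := by
      ext i j
      simp [iterateFrobenius_def, hq, ← pow_mul]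
    rw [hEq]
    exact h₂.map _
  -- the key equivalence
  have key : ∀ (j : ℕ) (X r : Matrix (Fin d) (Fin d) B),
      (X * ((α ^ q ^ j) • (1 : Matrix (Fin d) (Fin d) B) + N₂.map (· ^ q ^ j))
          = (α • (1 : Matrix (Fin d) (Fin d) B) + N₁) * X + r)
        ↔ ((α ^ q ^ j - α) • X + (X * N₂.map (· ^ q ^ j) - N₁ * X) = r) := by
    intro j X r
    have expand : X * ((α ^ q ^ j) • (1 : Matrix (Fin d) (Fin d) B) + N₂.map (· ^ q ^ j))
        - ((α • (1 : Matrix (Fin d) (Fin d) B) + N₁) * X)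
        = (α ^ q ^ j - α) • X + (X * N₂.map (· ^ q ^ j) - N₁ * X) := by
      rw [mul_add, add_mul, Matrix.mul_smul, mul_one, Matrix.smul_mul, one_mul, sub_smul]
      abel
    rw [← sub_eq_iff_eq_add', expand]
  -- unique solvability of each step
  have step : ∀ j : ℕ, 1 ≤ j → ∀ r : Matrix (Fin d) (Fin d) B,
      ∃! X : Matrix (Fin d) (Fin d) B,
        X * ((α ^ q ^ j) • (1 : Matrix (Fin d) (Fin d) B) + N₂.map (· ^ q ^ j))
          = (α • (1 : Matrix (Fin d) (Fin d) B) + N₁) * X + r := by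
    intro j hj r
    obtain ⟨X, hX, hXu⟩ :=
      sylvester (α ^ q ^ j - α) (hα j hj) N₁ (N₂.map (· ^ q ^ j)) h₁ (hmapnil j) r
    exact ⟨X, (key j X r).mpr hX, fun Y hY => hXu Y ((key j Y r).mp hY)⟩
  -- construct the sequence
  set F : (j : ℕ) → (Fin j → Matrix (Fin d) (Fin d) B) → Matrix (Fin d) (Fin d) B :=
    fun j prev =>
      if hj : 1 ≤ j then
        (step j hj (∑ k ∈ Finset.Icc 1 j,
          a k * ((if h : j - k < j then prev ⟨j - k, h⟩ else 0)).map (· ^ q ^ k))).choose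
      else e₀ with hF
  set e : ℕ → Matrix (Fin d) (Fin d) B := seqAux e₀ F with he
  have he0 : e 0 = e₀ := by rw [he, seqAux]
  have heq : ∀ j : ℕ, 1 ≤ j →
      e j * ((α ^ q ^ j) • (1 : Matrix (Fin d) (Fin d) B) + N₂.map (· ^ q ^ j))
        = (α • (1 : Matrix (Fin d) (Fin d) B) + N₁) * e j +
            ∑ k ∈ Finset.Icc 1 j, a k * (e (j - k)).map (· ^ q ^ k) := by
    intro j hj
    obtain ⟨m, rfl⟩ : ∃ m, j = m + 1 := ⟨j - 1, by omega⟩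
    have hstep : e (m + 1) = F (m + 1) (fun i => e i.val) := by
      rw [he]; rw [seqAux]
    have hj1 : 1 ≤ m + 1 := hj
    set S : Matrix (Fin d) (Fin d) B := ∑ k ∈ Finset.Icc 1 (m + 1),
        a k * ((if h : m + 1 - k < m + 1 then e (m + 1 - k) else 0)).map (· ^ q ^ k) with hSdef
    have hE : e (m + 1) = (step (m + 1) hj1 S).choose := by
      rw [hstep, hF]
      show (if hj : 1 ≤ m + 1 then _ else e₀) = _
      rw [dif_pos hj1]
    have spec := (step (m + 1) hj1 S).choose_spec.1
    rw [← hE] at spec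
    have hS : S = ∑ k ∈ Finset.Icc 1 (m + 1), a k * (e (m + 1 - k)).map (· ^ q ^ k) := by
      rw [hSdef]
      refine Finset.sum_congr rfl fun k hk => ?_
      rw [Finset.mem_Icc] at hk
      rw [dif_pos (by omega)]
    rw [hS] at spec
    exact spec
  refine ⟨e, ⟨he0, heq⟩, ?_⟩
  rintro y ⟨hy0, hy⟩
  funext j
  induction j using Nat.strong_induction_on with
  | _ j ih =>
    rcases Nat.eq_zero_or_pos j with rfl | hj
    · rw [hy0, he0]
    · have hsum : (∑ k ∈ Finset.Icc 1 j, a k * (y (j - k)).map (· ^ q ^ k))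
          = ∑ k ∈ Finset.Icc 1 j, a k * (e (j - k)).map (· ^ q ^ k) := by
        refine Finset.sum_congr rfl fun k hk => ?_
        rw [Finset.mem_Icc] at hk
        rw [ih (j - k) (by omega)]
      have h1 := hy j hj
      rw [hsum] at h1
      exact (step j hj _).unique h1 (heq j hj)
end

section
/- Let q be a power of a prime p and let F be an algebraically closed field of characteristic p containing 𝔽_q, equipped with a nonarchimedean absolute value |·|. Let c ∈ F with |c| < 1. Then there exists a sequence v : ℕ → F with v₀ = 1, satisfying v_n − v_n^q = c·v_{n−1}^q for all n ≥ 1, and with |v_n| = |c|^{(qⁿ−1)/(q−1)} for all n ≥ 0; in particular |v_n| → 0 as n → ∞. -/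
/-!
Over the finite field `K` of order `q`, `∏ t : K, (x - t) = x ^ q - x`, so the roots of
`x - x ^ q = b` form a single coset of `K` in the algebraically closed field `F`, and the product of
their distances to `K` has norm `‖b‖`. For `‖b‖ < 1` some root therefore has norm `< 1`; for such a
root `‖x ^ q‖ < ‖x‖`, and the ultrametric inequality gives `‖x‖ = ‖x - x ^ q‖ = ‖b‖`. Solving
`v (k + 1) - v (k + 1) ^ q = c * v k ^ q` this way step by step multiplies the exponent of `‖c‖`
by `q` and adds one, which produces `1 + q + ⋯ + q ^ (k - 1) = (q ^ k - 1) / (q - 1)`.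
-/

open Polynomial Finset

theorem FiniteField.prod_univ_X_sub_C (K : Type*) [Field K] [Fintype K] :
    ∏ t : K, (X - C t) = (X ^ Fintype.card K - X : K[X]) := by
  have hmonic : (X ^ Fintype.card K - X : K[X]).Monic :=
    monic_X_pow_sub (degree_X_le.trans_lt (by exact_mod_cast Fintype.one_lt_card))
  have hdeg := FiniteField.X_pow_card_sub_X_natDegree_eq K (Fintype.one_lt_card (α := K))
  have hroots := FiniteField.roots_X_pow_card_sub_X K
  rw [← prod_multiset_X_sub_C_of_monic_of_roots_card_eq hmonic
      (by rw [hroots, hdeg, ← Finset.card_def, Finset.card_univ]),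
    hroots, Finset.prod_eq_multiset_prod]

theorem FiniteField.prod_univ_sub_map {K F : Type*} [Field K] [Fintype K] [CommRing F]
    (φ : K →+* F) (x : F) : ∏ t : K, (x - φ t) = x ^ Fintype.card K - x := by
  simpa [Polynomial.map_prod, eval_prod] using
    congrArg (fun f => (f.map φ).eval x) (FiniteField.prod_univ_X_sub_C K)

theorem exists_sub_pow_card_eq_and_norm_lt_one {K F : Type*} [Field K] [Fintype K] [NormedField F]
    [IsAlgClosed F] (φ : K →+* F) {b : F} (hb : ‖b‖ < 1) :
    ∃ y : F, y - y ^ Fintype.card K = b ∧ ‖y‖ < 1 := by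
  have hq := Fintype.one_lt_card (α := K)
  have hdeg : (X ^ Fintype.card K - X + C b : F[X]).natDegree = Fintype.card K := by
    rw [natDegree_add_C, FiniteField.X_pow_card_sub_X_natDegree_eq F hq]
  obtain ⟨x, hx⟩ := IsAlgClosed.exists_root (X ^ Fintype.card K - X + C b)
    (degree_ne_of_natDegree_ne (n := 0) (by omega))
  have hx : x ^ Fintype.card K - x = -b := by simpa [eq_neg_iff_add_eq_zero] using hx
  obtain ⟨t, ht⟩ : ∃ t : K, ‖x - φ t‖ < 1 := by
    by_contra! h
    have := Finset.one_le_prod (s := univ) fun t _ => h t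
    rw [← norm_prod, FiniteField.prod_univ_sub_map, hx, norm_neg] at this
    exact hb.not_ge this
  refine ⟨x - φ t, ?_, ht⟩
  -- translating by an element of `K` permutes the roots
  have hy : (x - φ t) ^ Fintype.card K - (x - φ t) = -b := by
    rw [← FiniteField.prod_univ_sub_map φ, ← hx, ← FiniteField.prod_univ_sub_map φ]
    exact Fintype.prod_equiv (Equiv.addLeft t) _ _ fun s => by simp [sub_sub]
  linear_combination -hy

theorem norm_sub_pow_eq_norm {F : Type*} [NormedField F] [IsUltrametricDist F] {y : F}
    (hy : ‖y‖ < 1) {q : ℕ} (hq : 1 < q) : ‖y - y ^ q‖ = ‖y‖ := by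
  rcases eq_or_ne y 0 with rfl | hy0
  · simp [zero_pow (by omega : q ≠ 0)]
  have hlt : ‖-y ^ q‖ < ‖y‖ := by
    rw [norm_neg, norm_pow]; exact pow_lt_self_of_lt_one₀ (norm_pos_iff.2 hy0) hy hq
  rw [sub_eq_add_neg, IsUltrametricDist.norm_add_eq_max_of_norm_ne_norm hlt.ne',
    max_eq_left hlt.le]

theorem exists_sub_pow_card_eq_and_norm_eq {K F : Type*} [Field K] [Fintype K] [NormedField F]
    [IsUltrametricDist F] [IsAlgClosed F] (φ : K →+* F) {b : F} (hb : ‖b‖ < 1) :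
    ∃ x : F, x - x ^ Fintype.card K = b ∧ ‖x‖ = ‖b‖ := by
  obtain ⟨x, hx, hx1⟩ := exists_sub_pow_card_eq_and_norm_lt_one φ hb
  exact ⟨x, hx, by rw [← hx, norm_sub_pow_eq_norm hx1 Fintype.one_lt_card]⟩

theorem exists_seq_sub_pow_eq_mul_pow {F : Type*} [NormedField F] {q : ℕ}
    (hroot : ∀ b : F, ‖b‖ < 1 → ∃ x, x - x ^ q = b ∧ ‖x‖ = ‖b‖) {c : F} (hc : ‖c‖ < 1) :
    ∃ v : ℕ → F, v 0 = 1 ∧ (∀ k, v (k + 1) - v (k + 1) ^ q = c * v k ^ q) ∧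
      ∀ k, ‖v k‖ = ‖c‖ ^ ∑ i ∈ range k, q ^ i := by
  choose! r hr hr_norm using hroot
  let v : ℕ → F := fun k => Nat.rec 1 (fun _ w => r (c * w ^ q)) k
  have hsmall : ∀ w : F, ‖w‖ ≤ 1 → ‖c * w ^ q‖ < 1 := fun w hw => by
    rw [norm_mul, norm_pow]
    exact mul_lt_one_of_nonneg_of_lt_one_left (norm_nonneg c) hc (pow_le_one₀ (norm_nonneg w) hw)
  have hnorm : ∀ k, ‖v k‖ = ‖c‖ ^ ∑ i ∈ range k, q ^ i := by
    intro k
    induction k with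
    | zero => simp [v]
    | succ k ih =>
      have hle : ‖v k‖ ≤ 1 := ih ▸ pow_le_one₀ (norm_nonneg c) hc.le
      change ‖r (c * v k ^ q)‖ = _
      rw [hr_norm _ (hsmall _ hle), norm_mul, norm_pow, ih, ← pow_mul, ← pow_succ',
        geom_sum_succ, mul_comm q]
  refine ⟨v, rfl, fun k => hr _ (hsmall _ ?_), hnorm⟩
  exact hnorm k ▸ pow_le_one₀ (norm_nonneg c) hc.le

theorem statement13_general
    (p n q : ℕ) [Fact p.Prime] (hn : n ≠ 0) (hq : q = p ^ n)
    (F : Type) [NormedField F] [IsUltrametricDist F] [IsAlgClosed F]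
    (φ : GaloisField p n →+* F)
    (c : F) (hc : ‖c‖ < 1) :
    ∃ v : ℕ → F, v 0 = 1 ∧
      (∀ k : ℕ, v (k + 1) - (v (k + 1)) ^ q = c * (v k) ^ q) ∧
      (∀ k : ℕ, ‖v k‖ = ‖c‖ ^ ((((q : ℝ) ^ k) - 1) / ((q : ℝ) - 1))) ∧
      Filter.Tendsto (fun k => ‖v k‖) Filter.atTop (nhds 0) := by
  have := Fintype.ofFinite (GaloisField p n)
  have hcard : Fintype.card (GaloisField p n) = q := by
    rw [← Nat.card_eq_fintype_card, GaloisField.card p n hn, hq]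
  obtain ⟨v, hv0, hrec, hnorm⟩ :=
    exists_seq_sub_pow_eq_mul_pow (fun b hb => hcard ▸ exists_sub_pow_card_eq_and_norm_eq φ hb) hc
  have hq1 : 1 < q := hcard ▸ Fintype.one_lt_card
  refine ⟨v, hv0, hrec, fun k => ?_, ?_⟩
  · rw [hnorm, ← geom_sum_eq (by exact_mod_cast hq1.ne'), ← Real.rpow_natCast]
    norm_cast
  · have hk : ∀ k, k ≤ ∑ i ∈ range k, q ^ i := fun k => by
      simpa using Finset.sum_le_sum fun i (_ : i ∈ range k) => Nat.one_le_pow i q (by omega)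
    exact squeeze_zero (fun k => norm_nonneg _)
      (fun k => hnorm k ▸ pow_le_pow_of_le_one (norm_nonneg c) hc.le (hk k))
      (tendsto_pow_atTop_nhds_zero_of_lt_one (norm_nonneg c) hc)

/-- Let `q = pⁿ` and let `F ⊇ 𝔽_q` be an algebraically closed field of
characteristic `p` with a nonarchimedean absolute value.  Let `c ∈ F` with `|c| < 1`.  Then
there exists a sequence `v : ℕ → F` with `v₀ = 1`, satisfying `v_k - v_k^q = c·v_{k-1}^q` for
all `k ≥ 1`, and with `|v_k| = |c|^{(q^k-1)/(q-1)}` for all `k`; in particular `|v_k| → 0`. -/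
theorem statement13
    (p n q : ℕ) [Fact p.Prime] (hn : n ≠ 0) (hq : q = p ^ n)
    (F : Type) [NormedField F] [IsUltrametricDist F] [IsAlgClosed F] [CharP F p]
    (φ : GaloisField p n →+* F)
    (c : F) (hc : ‖c‖ < 1) :
    ∃ v : ℕ → F, v 0 = 1 ∧
      (∀ k : ℕ, v (k + 1) - (v (k + 1)) ^ q = c * (v k) ^ q) ∧
      (∀ k : ℕ, ‖v k‖ = ‖c‖ ^ ((((q : ℝ) ^ k) - 1) / ((q : ℝ) - 1))) ∧
      Filter.Tendsto (fun k => ‖v k‖) Filter.atTop (nhds 0) :=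
  statement13_general p n q hn hq F φ c hc
end

section
/- Let q be a power of a prime p and let F be a field of characteristic p containing 𝔽_q, equipped with a nonarchimedean absolute value |·|. Let c ∈ F with |c| ≥ 1 and let v : ℕ → F be a sequence with |v₀| = 1 satisfying v_n − v_n^q = c·v_{n−1}^q for all n ≥ 1. Then |v_n| = |c|^{n/q} ≥ 1 for all n ≥ 0; in particular the sequence (v_n) does not tend to 0. -/
/-- Let `q = pⁿ` and let `F ⊇ 𝔽_q` be a field of characteristic `p` with a
nonarchimedean absolute value.  Let `c ∈ F` with `|c| ≥ 1` and let `v : ℕ → F` satisfy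
`|v₀| = 1` and `v_k - v_k^q = c·v_{k-1}^q` for all `k ≥ 1`.  Then `|v_k| = |c|^{k/q} ≥ 1` for
all `k`; in particular `(v_k)` does not tend to `0`. -/
theorem statement14
    (p n q : ℕ) [Fact p.Prime] (hn : n ≠ 0) (hq : q = p ^ n)
    (F : Type) [NormedField F] [IsUltrametricDist F] [CharP F p]
    (φ : GaloisField p n →+* F)
    (c : F) (hc : 1 ≤ ‖c‖)
    (v : ℕ → F) (hv0 : ‖v 0‖ = 1)
    (hrec : ∀ k : ℕ, v (k + 1) - (v (k + 1)) ^ q = c * (v k) ^ q) :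
    (∀ k : ℕ, ‖v k‖ = ‖c‖ ^ ((k : ℝ) / (q : ℝ)) ∧ 1 ≤ ‖v k‖) ∧
    ¬ Filter.Tendsto v Filter.atTop (nhds 0) := by
  have hp2 : 2 ≤ p := (Fact.out : p.Prime).two_le
  have hq2 : 2 ≤ q := by
    have h := Nat.le_self_pow hn p
    omega
  have hqne : q ≠ 0 := by omega
  have hq1 : 1 < q := by omega
  have key : ∀ k, 1 ≤ ‖v k‖ ∧ ‖v k‖ ^ q = ‖c‖ ^ k := by
    intro k
    induction k with
    | zero => simp [hv0]
    | succ k ih =>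
      obtain ⟨ih1, ih2⟩ := ih
      set x := v (k + 1) with hx
      have hnorm : ‖x - x ^ q‖ = ‖c‖ ^ (k + 1) := by
        rw [hrec k, norm_mul, norm_pow, ih2, pow_succ]
        ring
      have hck : 1 ≤ ‖c‖ ^ (k + 1) := one_le_pow₀ hc
      have ha1 : 1 ≤ ‖x‖ := by
        by_contra h
        push_neg at h
        have hle : ‖x - x ^ q‖ ≤ max ‖x‖ ‖x ^ q‖ := by
          simpa [sub_eq_add_neg] using IsUltrametricDist.norm_add_le_max x (-(x ^ q))
        have hxq : ‖x ^ q‖ ≤ ‖x‖ := by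
          rw [norm_pow]
          calc ‖x‖ ^ q ≤ ‖x‖ ^ 1 :=
            pow_le_pow_of_le_one (norm_nonneg x) h.le (by omega)
          _ = ‖x‖ := pow_one _
        have : ‖x - x ^ q‖ < 1 := lt_of_le_of_lt (hle.trans (max_le le_rfl hxq)) h
        rw [hnorm] at this
        linarith
      refine ⟨ha1, ?_⟩
      rcases eq_or_lt_of_le ha1 with heq | hlt
      · have hle : ‖x - x ^ q‖ ≤ 1 := by
          have := IsUltrametricDist.norm_add_le_max x (-(x ^ q))
          rw [← sub_eq_add_neg] at this
          refine this.trans (max_le (le_of_eq heq.symm) ?_)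
          rw [norm_neg, norm_pow, ← heq, one_pow]
        rw [hnorm] at hle
        rw [← heq, one_pow]
        linarith
      · have hne : ‖x‖ ≠ ‖x ^ q‖ := by
          rw [norm_pow]
          exact ne_of_lt (lt_self_pow₀ hlt hq1)
        have := IsUltrametricDist.norm_add_eq_max_of_norm_ne_norm
          (x := x) (y := -(x ^ q)) (by simpa using hne)
        rw [← sub_eq_add_neg, norm_neg] at this
        rw [hnorm] at this
        rw [max_eq_right (by rw [norm_pow]; exact (lt_self_pow₀ hlt hq1).le)] at this
        rw [norm_pow] at this
        exact this.symm
  refine ⟨fun k => ?_, fun h => ?_⟩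
  · obtain ⟨h1, h2⟩ := key k
    have hrpow : (‖c‖ ^ ((k : ℝ) / (q : ℝ))) ^ q = ‖c‖ ^ k := by
      rw [← Real.rpow_natCast (‖c‖ ^ ((k : ℝ) / (q : ℝ))) q,
        ← Real.rpow_mul (norm_nonneg c),
        div_mul_cancel₀ _ (Nat.cast_ne_zero.mpr hqne), Real.rpow_natCast]
    refine ⟨(pow_left_inj₀ (norm_nonneg _) (Real.rpow_nonneg (norm_nonneg c) _) hqne).mp ?_, h1⟩
    rw [h2, hrpow]
  · have h1 := NormedAddCommGroup.tendsto_nhds_zero.mp h 1 one_pos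
    obtain ⟨k, hk⟩ := h1.exists
    linarith [(key k).1]
end

section
/- Let q be a power of a prime p and let F be an algebraically closed field of characteristic p containing 𝔽_q, equipped with a nonarchimedean absolute value |·|. Let r be a real number with 0 < r < 1 and let a, b, c, d ∈ F satisfy |a| ≤ r, |d| ≤ r, r ≤ |b|, and |c| ≤ r²/|b|. Then for any prescribed initial values u₀, w₀ ∈ F there exist sequences u, w : ℕ → F starting at u₀, w₀ which satisfy u_n − u_n^q = a·u_{n−1}^q + b·w_{n−1}^q and w_n − w_n^q = c·u_{n−1}^q + d·w_{n−1}^q for all n ≥ 1, and which obey the estimate max(|u_n|^q, (|b|/r)·|w_n|^q) ≤ rⁿ · max(|u₀|^q, (|b|/r)·|w₀|^q) for all n ≥ 0; in particular |u_n| → 0 and |w_n| → 0 as n → ∞. -/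
/-!
Each step of the recursion solves an Artin–Schreier type equation `x - x ^ q = t`. Its `q` roots
multiply to `± t`, so a root of least absolute value has `|x| ^ q ≤ |t|`. With this choice the
`q`-th powers of the new values are bounded by the image of the old `q`-th powers under the matrix
`(a b; c d)`, which by the ultrametric inequality contracts the weighted max-norm
`max |x| ((|b| / r) |y|)` by the factor `r`.
-/

open Polynomial Filter Topology

theorem Polynomial.Monic.exists_mem_roots_nnnorm_pow_le {F : Type*} [NormedField F] {P : F[X]}
    (hm : P.Monic) (hs : P.Splits) (hd : P.natDegree ≠ 0) :
    ∃ x ∈ P.roots, ‖x‖₊ ^ P.natDegree ≤ ‖P.coeff 0‖₊ := by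
  have hcard : P.roots.card = P.natDegree := hs.natDegree_eq_card_roots.symm
  obtain ⟨x, hx, hmin⟩ := Multiset.exists_min_image (fun y : F => ‖y‖₊)
    (s := P.roots) fun h => hd (by simpa [h] using hcard.symm)
  refine ⟨x, hx, ?_⟩
  have hprod : ‖P.coeff 0‖₊ = (P.roots.map fun y => ‖y‖₊).prod := by
    rw [hs.coeff_zero_eq_prod_roots_of_monic hm, nnnorm_mul, nnnorm_pow, nnnorm_neg, nnnorm_one,
      one_pow, one_mul]
    exact map_multiset_prod (nnnormHom : F →*₀ NNReal) P.roots
  rw [hprod, ← hcard, ← Multiset.card_map (fun y => ‖y‖₊)]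
  exact Multiset.pow_card_le_prod (Multiset.forall_mem_map_iff.mpr hmin)

theorem exists_sub_pow_eq_of_norm_pow_le {F : Type*} [NormedField F] [IsAlgClosed F] {q : ℕ}
    (hq : 1 < q) (t : F) : ∃ x : F, x - x ^ q = t ∧ ‖x‖ ^ q ≤ ‖t‖ := by
  have hdeg : (X - C t).degree < (q : WithBot ℕ) := by
    rw [degree_X_sub_C]; exact_mod_cast hq
  have hm : (X ^ q - (X - C t)).Monic := monic_X_pow_sub hdeg
  have hnat : (X ^ q - (X - C t)).natDegree = q := by
    rw [natDegree_sub_eq_left_of_natDegree_lt] <;> simp [hq]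
  obtain ⟨x, hx, hle⟩ :=
    hm.exists_mem_roots_nnnorm_pow_le (IsAlgClosed.splits _) (by omega)
  refine ⟨x, ?_, ?_⟩
  · have hroot : x ^ q - (x - t) = 0 := by
      simpa using (mem_roots hm.ne_zero).mp hx
    linear_combination -hroot
  · have hcoeff : (X ^ q - (X - C t)).coeff 0 = t := by
      simp [coeff_X_pow]; omega
    rw [hnat, hcoeff] at hle
    exact_mod_cast hle

theorem max_norm_mul_add_mul_le {F : Type*} [NormedField F] [IsUltrametricDist F] {r s : ℝ}
    (hs : 0 ≤ s) {a b c d : F} (ha : ‖a‖ ≤ r) (hb : ‖b‖ ≤ r * s) (hc : s * ‖c‖ ≤ r)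
    (hd : ‖d‖ ≤ r) (x y : F) :
    max ‖a * x + b * y‖ (s * ‖c * x + d * y‖) ≤ r * max ‖x‖ (s * ‖y‖) := by
  have hr : 0 ≤ r := (norm_nonneg a).trans ha
  have hx : r * ‖x‖ ≤ r * max ‖x‖ (s * ‖y‖) := mul_le_mul_of_nonneg_left (le_max_left ..) hr
  have hy : r * (s * ‖y‖) ≤ r * max ‖x‖ (s * ‖y‖) :=
    mul_le_mul_of_nonneg_left (le_max_right ..) hr
  refine max_le ?_ ?_
  · refine (IsUltrametricDist.norm_add_le_max _ _).trans (max_le ?_ ?_)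
    · rw [norm_mul]
      exact (mul_le_mul_of_nonneg_right ha (norm_nonneg x)).trans hx
    · calc ‖b * y‖ ≤ r * s * ‖y‖ := by
            rw [norm_mul]; exact mul_le_mul_of_nonneg_right hb (norm_nonneg y)
        _ ≤ _ := by rw [mul_assoc]; exact hy
  · refine (mul_le_mul_of_nonneg_left (IsUltrametricDist.norm_add_le_max _ _) hs).trans ?_
    rw [mul_max_of_nonneg _ _ hs]
    refine max_le ?_ ?_
    · calc s * ‖c * x‖ = s * ‖c‖ * ‖x‖ := by rw [norm_mul, mul_assoc]
        _ ≤ _ := (mul_le_mul_of_nonneg_right hc (norm_nonneg x)).trans hx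
    · calc s * ‖d * y‖ = ‖d‖ * (s * ‖y‖) := by rw [norm_mul]; ring
        _ ≤ _ := (mul_le_mul_of_nonneg_right hd (by positivity)).trans hy

theorem le_pow_mul_of_iterate {α : Type*} {T : α → α} {N : α → ℝ} {r : ℝ} (hr : 0 ≤ r)
    (hT : ∀ x, N (T x) ≤ r * N x) (k : ℕ) (x : α) : N (T^[k] x) ≤ r ^ k * N x := by
  induction k with
  | zero => simp
  | succ k ih =>
    calc N (T^[k + 1] x) ≤ r * N (T^[k] x) := by
          rw [Function.iterate_succ_apply']; exact hT _
      _ ≤ r * (r ^ k * N x) := mul_le_mul_of_nonneg_left ih hr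
      _ = r ^ (k + 1) * N x := by ring

theorem tendsto_nhds_zero_of_pow_le {ι : Type*} {l : Filter ι} {x g : ι → ℝ} {q : ℕ}
    (hq : q ≠ 0) (hx : ∀ i, 0 ≤ x i) (hxg : ∀ i, x i ^ q ≤ g i) (hg : Tendsto g l (𝓝 0)) :
    Tendsto x l (𝓝 0) := by
  have hpow : Tendsto (fun i => x i ^ q) l (𝓝 0) :=
    squeeze_zero (fun i => pow_nonneg (hx i) q) hxg hg
  have hroot : Tendsto (fun y : ℝ => y ^ (q⁻¹ : ℝ)) (𝓝 0) (𝓝 0) := by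
    simpa [Real.zero_rpow (by positivity : (q⁻¹ : ℝ) ≠ 0)] using
      (Real.continuousAt_rpow_const 0 (q⁻¹ : ℝ) (Or.inr (by positivity))).tendsto
  simpa only [Function.comp_def, Real.pow_rpow_inv_natCast (hx _) hq] using hroot.comp hpow

theorem statement16_general
    (p n q : ℕ) [Fact p.Prime] (hn : n ≠ 0) (hq : q = p ^ n)
    (F : Type) [NormedField F] [IsUltrametricDist F] [IsAlgClosed F]
    (r : ℝ) (hr0 : 0 < r) (hr1 : r < 1)
    (a b c d : F) (ha : ‖a‖ ≤ r) (hd : ‖d‖ ≤ r) (hb : r ≤ ‖b‖) (hc : ‖c‖ ≤ r ^ 2 / ‖b‖)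
    (u₀ w₀ : F) :
    ∃ u w : ℕ → F, u 0 = u₀ ∧ w 0 = w₀ ∧
      (∀ k : ℕ, u (k + 1) - (u (k + 1)) ^ q = a * (u k) ^ q + b * (w k) ^ q) ∧
      (∀ k : ℕ, w (k + 1) - (w (k + 1)) ^ q = c * (u k) ^ q + d * (w k) ^ q) ∧
      (∀ k : ℕ, max (‖u k‖ ^ q) ((‖b‖ / r) * ‖w k‖ ^ q)
        ≤ r ^ k * max (‖u₀‖ ^ q) ((‖b‖ / r) * ‖w₀‖ ^ q)) ∧
      Filter.Tendsto (fun k => ‖u k‖) Filter.atTop (nhds 0) ∧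
      Filter.Tendsto (fun k => ‖w k‖) Filter.atTop (nhds 0) := by
  have hq1 : 1 < q := hq ▸ Nat.one_lt_pow hn (Fact.out : p.Prime).one_lt
  choose f hf_eq hf_norm using exists_sub_pow_eq_of_norm_pow_le (F := F) hq1
  set s := ‖b‖ / r with hs
  have hb0 : ‖b‖ ≠ 0 := (hr0.trans_le hb).ne'
  have hs1 : 1 ≤ s := (one_le_div hr0).mpr hb
  have hcs : s * ‖c‖ ≤ r :=
    (mul_le_mul_of_nonneg_left hc (by positivity)).trans_eq (by rw [hs]; field_simp)
  let T : F × F → F × F := fun v =>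
    (f (a * v.1 ^ q + b * v.2 ^ q), f (c * v.1 ^ q + d * v.2 ^ q))
  let N : F × F → ℝ := fun v => max (‖v.1‖ ^ q) (s * ‖v.2‖ ^ q)
  have hT : ∀ v, N (T v) ≤ r * N v := fun v => by
    refine (max_le_max (hf_norm _)
      (mul_le_mul_of_nonneg_left (hf_norm _) (by positivity))).trans ?_
    simpa only [norm_pow] using max_norm_mul_add_mul_le (by positivity) ha
      (mul_div_cancel₀ ‖b‖ hr0.ne').ge hcs hd (v.1 ^ q) (v.2 ^ q)
  have hbound := le_pow_mul_of_iterate hr0.le hT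
  have hgeom : Tendsto (fun k => r ^ k * N (u₀, w₀)) atTop (𝓝 0) := by
    simpa using (tendsto_pow_atTop_nhds_zero_of_lt_one hr0.le hr1).mul_const (N (u₀, w₀))
  refine ⟨fun k => (T^[k] (u₀, w₀)).1, fun k => (T^[k] (u₀, w₀)).2, rfl, rfl,
    fun k => ?_, fun k => ?_, fun k => hbound k _, ?_, ?_⟩
  · dsimp only; rw [Function.iterate_succ_apply']; exact hf_eq _
  · dsimp only; rw [Function.iterate_succ_apply']; exact hf_eq _
  · exact tendsto_nhds_zero_of_pow_le (by omega) (fun _ => norm_nonneg _)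
      (fun k => (le_max_left _ _).trans (hbound k _)) hgeom
  · exact tendsto_nhds_zero_of_pow_le (by omega) (fun _ => norm_nonneg _)
      (fun k => (le_mul_of_one_le_left (by positivity) hs1).trans
        ((le_max_right _ _).trans (hbound k _))) hgeom

/-- Let `q = pⁿ` and let `F ⊇ 𝔽_q` be an algebraically closed field of
characteristic `p` with a nonarchimedean absolute value.  Let `0 < r < 1` be real and let
`a, b, c, d ∈ F` satisfy `|a| ≤ r`, `|d| ≤ r`, `r ≤ |b|` and `|c| ≤ r²/|b|`.  Then for any
initial values `u₀, w₀` there are sequences `u, w : ℕ → F` starting at `u₀, w₀`, satisfying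
`u_k - u_k^q = a u_{k-1}^q + b w_{k-1}^q` and `w_k - w_k^q = c u_{k-1}^q + d w_{k-1}^q` for all
`k ≥ 1`, and obeying
`max(|u_k|^q, (|b|/r)|w_k|^q) ≤ r^k · max(|u₀|^q, (|b|/r)|w₀|^q)`;
in particular `|u_k| → 0` and `|w_k| → 0`. -/
theorem statement16
    (p n q : ℕ) [Fact p.Prime] (hn : n ≠ 0) (hq : q = p ^ n)
    (F : Type) [NormedField F] [IsUltrametricDist F] [IsAlgClosed F] [CharP F p]
    (φ : GaloisField p n →+* F)
    (r : ℝ) (hr0 : 0 < r) (hr1 : r < 1)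
    (a b c d : F) (ha : ‖a‖ ≤ r) (hd : ‖d‖ ≤ r) (hb : r ≤ ‖b‖) (hc : ‖c‖ ≤ r ^ 2 / ‖b‖)
    (u₀ w₀ : F) :
    ∃ u w : ℕ → F, u 0 = u₀ ∧ w 0 = w₀ ∧
      (∀ k : ℕ, u (k + 1) - (u (k + 1)) ^ q = a * (u k) ^ q + b * (w k) ^ q) ∧
      (∀ k : ℕ, w (k + 1) - (w (k + 1)) ^ q = c * (u k) ^ q + d * (w k) ^ q) ∧
      (∀ k : ℕ, max (‖u k‖ ^ q) ((‖b‖ / r) * ‖w k‖ ^ q)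
        ≤ r ^ k * max (‖u₀‖ ^ q) ((‖b‖ / r) * ‖w₀‖ ^ q)) ∧
      Filter.Tendsto (fun k => ‖u k‖) Filter.atTop (nhds 0) ∧
      Filter.Tendsto (fun k => ‖w k‖) Filter.atTop (nhds 0) :=
  statement16_general p n q hn hq F r hr0 hr1 a b c d ha hd hb hc u₀ w₀
end

section
/- Let q be a power of a prime p and let F be a field of characteristic p containing 𝔽_q, equipped with a nonarchimedean absolute value |·|. Let ζ, a, b, c, d ∈ F satisfy a + d = −2ζ, ad − bc = ζ², and |ζ| < 1, and set ã := −ζ − a, b̃ := −b, d̃ := −ζ − d (so that ã = −d̃ and ã·d̃ = b̃·c̃ with c̃ := −c). Assume 1 ≤ |d̃| ≤ |b̃| and |b̃^{q−1} − d̃^{q−1}| = |b̃|^{q−1}. Let v, x : ℕ → F be sequences with v₀ = 0 and x₀ = 1 satisfying v_n − v_n^q = a·v_{n−1}^q + b·x_{n−1}^q and x_n − x_n^q = c·v_{n−1}^q + d·x_{n−1}^q for all n ≥ 1. Then for every n ≥ 0: |x_n| = |d̃|^{(1−q^{−n})/(q−1)} ≥ 1, |v_n| ≤ |b̃|·|x_n|,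 and |b̃·x_n − d̃·v_n| = |b̃|·|x_n|; in particular the sequence (x_n) does not tend to 0. -/
/-- In an ultrametric field, adding something strictly smaller does not change the norm. -/
lemma st17_add_eq {F : Type} [NormedField F] [IsUltrametricDist F] {A B : F}
    (h : ‖B‖ < ‖A‖) : ‖A + B‖ = ‖A‖ := by
  rw [IsUltrametricDist.norm_add_eq_max_of_norm_ne_norm h.ne']
  exact max_eq_left h.le

lemma st17_sub_eq {F : Type} [NormedField F] [IsUltrametricDist F] {A B : F}
    (h : ‖B‖ < ‖A‖) : ‖A - B‖ = ‖A‖ := by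
  rw [sub_eq_add_neg, st17_add_eq (by simpa using h)]

/-- If `‖X - X^q‖ = R ≥ 1`, then `‖X‖^q = R` and `‖X‖ ≥ 1`. -/
lemma st17_L1 {F : Type} [NormedField F] [IsUltrametricDist F] {q : ℕ} (hq : 2 ≤ q)
    {X : F} {R : ℝ} (h : ‖X - X ^ q‖ = R) (hR : 1 ≤ R) : ‖X‖ ^ q = R ∧ 1 ≤ ‖X‖ := by
  rcases lt_trichotomy ‖X‖ 1 with h1 | h1 | h1
  · exfalso
    have hX0 : X ≠ 0 := by
      rintro rfl
      simp only [zero_pow (by omega : q ≠ 0), sub_zero, norm_zero] at h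
      linarith
    have hlt : ‖X ^ q‖ < ‖X‖ := by
      rw [norm_pow]
      calc ‖X‖ ^ q < ‖X‖ ^ 1 :=
            pow_lt_pow_right_of_lt_one₀ (norm_pos_iff.mpr hX0) h1 (by omega)
        _ = ‖X‖ := pow_one _
    rw [st17_sub_eq hlt] at h
    linarith
  · have hle : ‖X - X ^ q‖ ≤ 1 := by
      rw [sub_eq_add_neg]
      refine (IsUltrametricDist.norm_add_le_max _ _).trans ?_
      simp [norm_pow, h1]
    rw [h] at hle
    have : R = 1 := le_antisymm hle hR
    simp [h1, this]
  · have hlt : ‖X‖ < ‖X ^ q‖ := by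
      rw [norm_pow]
      calc ‖X‖ = ‖X‖ ^ 1 := (pow_one _).symm
        _ < ‖X‖ ^ q := pow_lt_pow_right₀ h1 (by omega)
    have : ‖X - X ^ q‖ = ‖X‖ ^ q := by
      rw [← norm_neg, neg_sub, st17_sub_eq hlt, norm_pow]
    rw [this] at h
    exact ⟨h, h1.le⟩

/-- If `‖X - X^q‖ ≤ M` with `M ≥ 1`, then `‖X‖^q ≤ M`. -/
lemma st17_L2 {F : Type} [NormedField F] [IsUltrametricDist F] {q : ℕ} (hq : 2 ≤ q)
    {X : F} {M : ℝ} (h : ‖X - X ^ q‖ ≤ M) (hM : 1 ≤ M) : ‖X‖ ^ q ≤ M := by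
  rcases le_or_gt ‖X‖ 1 with h1 | h1
  · calc ‖X‖ ^ q ≤ 1 ^ q := pow_le_pow_left₀ (norm_nonneg _) h1 q
      _ = 1 := one_pow _
      _ ≤ M := hM
  · have hlt : ‖X‖ < ‖X ^ q‖ := by
      rw [norm_pow]
      calc ‖X‖ = ‖X‖ ^ 1 := (pow_one _).symm
        _ < ‖X‖ ^ q := pow_lt_pow_right₀ h1 (by omega)
    have : ‖X - X ^ q‖ = ‖X‖ ^ q := by
      rw [← norm_neg, neg_sub, st17_sub_eq hlt, norm_pow]
    rwa [this] at h
/-- Let `q = pⁿ` and let `F ⊇ 𝔽_q` be a field of characteristic `p` with a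
nonarchimedean absolute value.  Let `ζ, a, b, c, d ∈ F` satisfy `a + d = -2ζ`,
`ad - bc = ζ²` and `|ζ| < 1`, and set `b̃ = -b`, `d̃ = -ζ - d`.  Assume `1 ≤ |d̃| ≤ |b̃|` and
`|b̃^{q-1} - d̃^{q-1}| = |b̃|^{q-1}`.  Let `v, x : ℕ → F` satisfy `v₀ = 0`, `x₀ = 1`,
`v_k - v_k^q = a v_{k-1}^q + b x_{k-1}^q` and `x_k - x_k^q = c v_{k-1}^q + d x_{k-1}^q` for all
`k ≥ 1`.  Then for every `k`: `|x_k| = |d̃|^{(1-q^{-k})/(q-1)} ≥ 1`, `|v_k| ≤ |b̃||x_k|`, and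
`|b̃ x_k - d̃ v_k| = |b̃||x_k|`; in particular `(x_k)` does not tend to `0`. -/
theorem statement17
    (p n q : ℕ) [Fact p.Prime] (hn : n ≠ 0) (hq : q = p ^ n)
    (F : Type) [NormedField F] [IsUltrametricDist F] [CharP F p]
    (φ : GaloisField p n →+* F)
    (ζ a b c d : F)
    (hsum : a + d = -(2 * ζ)) (hdet : a * d - b * c = ζ ^ 2) (hζ : ‖ζ‖ < 1)
    (hd1 : 1 ≤ ‖-ζ - d‖) (hdb : ‖-ζ - d‖ ≤ ‖-b‖)
    (hbd : ‖(-b) ^ (q - 1) - (-ζ - d) ^ (q - 1)‖ = ‖-b‖ ^ (q - 1))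
    (v x : ℕ → F) (hv0 : v 0 = 0) (hx0 : x 0 = 1)
    (hrecv : ∀ k : ℕ, v (k + 1) - (v (k + 1)) ^ q = a * (v k) ^ q + b * (x k) ^ q)
    (hrecx : ∀ k : ℕ, x (k + 1) - (x (k + 1)) ^ q = c * (v k) ^ q + d * (x k) ^ q) :
    (∀ k : ℕ,
      ‖x k‖ = ‖-ζ - d‖ ^ ((1 - (((q : ℝ) ^ k)⁻¹)) / ((q : ℝ) - 1)) ∧
      1 ≤ ‖x k‖ ∧
      ‖v k‖ ≤ ‖-b‖ * ‖x k‖ ∧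
      ‖(-b) * x k - (-ζ - d) * v k‖ = ‖-b‖ * ‖x k‖) ∧
    ¬ Filter.Tendsto x Filter.atTop (nhds 0) := by
  have hp2 : 2 ≤ p := (Fact.out : p.Prime).two_le
  have hq2 : 2 ≤ q := by
    rw [hq]
    calc 2 ≤ p := hp2
      _ = p ^ 1 := (pow_one p).symm
      _ ≤ p ^ n := Nat.pow_le_pow_right (by omega) (by omega)
  obtain ⟨Q, rfl⟩ : ∃ Q, q = Q + 1 := ⟨q - 1, by omega⟩
  have hQ1 : 1 ≤ Q := by omega
  simp only [Nat.add_sub_cancel] at hbd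
  -- Frobenius
  have frobeq : ∀ A B : F, (A - B) ^ (Q + 1) = A ^ (Q + 1) - B ^ (Q + 1) := by
    intro A B
    have h := sub_pow_char_pow A B n (p := p)
    rwa [← hq] at h
  -- basic norm facts
  have hB1 : (1:ℝ) ≤ ‖-b‖ := le_trans hd1 hdb
  have hB0 : (0:ℝ) < ‖-b‖ := lt_of_lt_of_le one_pos hB1
  have hD0 : (0:ℝ) < ‖-ζ - d‖ := lt_of_lt_of_le one_pos hd1
  -- real exponent bookkeeping
  have hN1 : (1:ℝ) < ((Q + 1 : ℕ) : ℝ) := by exact_mod_cast hq2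
  have hN0 : (0:ℝ) < ((Q + 1 : ℕ) : ℝ) - 1 := by linarith
  set N : ℝ := ((Q + 1 : ℕ) : ℝ) with hNdef
  set e : ℕ → ℝ := fun k => (1 - ((N : ℝ) ^ k)⁻¹) / (N - 1) with he
  set X : ℕ → ℝ := fun k => ‖-ζ - d‖ ^ e k with hX
  have hNpow : ∀ k : ℕ, (1:ℝ) ≤ N ^ k := fun k => one_le_pow₀ hN1.le
  have hNpow0 : ∀ k : ℕ, (0:ℝ) < N ^ k := fun k => lt_of_lt_of_le one_pos (hNpow k)
  have he_nonneg : ∀ k, 0 ≤ e k := by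
    intro k
    apply div_nonneg _ hN0.le
    have := hNpow k
    have h2 : (N ^ k)⁻¹ ≤ 1 := inv_le_one_of_one_le₀ (hNpow k)
    linarith
  have hemono : ∀ k, e k ≤ e (k + 1) := by
    intro k
    have h1 : N ^ k ≤ N ^ (k+1) := pow_le_pow_right₀ hN1.le (by omega)
    have h2 : (N ^ (k+1))⁻¹ ≤ (N ^ k)⁻¹ := by
      apply inv_anti₀ (hNpow0 k) h1
    simp only [he]
    gcongr
    all_goals linarith
  have heq : ∀ k, N * e (k + 1) = 1 + e k := by
    intro k
    simp only [he]
    have h1 : N ^ (k+1) ≠ 0 := (hNpow0 (k+1)).ne'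
    have h2 : N ^ k ≠ 0 := (hNpow0 k).ne'
    have h3 : N - 1 ≠ 0 := hN0.ne'
    field_simp
    ring
  have heQ : ∀ k, e k * ((Q:ℕ) : ℝ) ≤ 1 := by
    intro k
    have hQN : ((Q:ℕ) : ℝ) = N - 1 := by rw [hNdef]; push_cast; ring
    rw [hQN, he]
    rw [div_mul_cancel₀ _ hN0.ne']
    have h2 : (0:ℝ) ≤ (N ^ k)⁻¹ := by positivity
    linarith
  have hX1 : ∀ k, 1 ≤ X k := by
    intro k
    have := Real.rpow_le_rpow_of_exponent_le hd1 (he_nonneg k)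
    rwa [Real.rpow_zero] at this
  have hX0 : ∀ k, 0 < X k := fun k => lt_of_lt_of_le one_pos (hX1 k)
  have hXmono : ∀ k, X k ≤ X (k + 1) := fun k =>
    Real.rpow_le_rpow_of_exponent_le hd1 (hemono k)
  have hXq : ∀ k, X (k + 1) ^ (Q + 1) = ‖-ζ - d‖ * X k := by
    intro k
    simp only [hX]
    rw [← Real.rpow_natCast (‖-ζ - d‖ ^ e (k+1)) (Q+1), ← Real.rpow_mul hD0.le,
      mul_comm (e (k+1)), heq k, Real.rpow_add hD0, Real.rpow_one]
  have hXQle : ∀ k, X k ^ Q ≤ ‖-ζ - d‖ := by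
    intro k
    simp only [hX]
    rw [← Real.rpow_natCast (‖-ζ - d‖ ^ e k) Q, ← Real.rpow_mul hD0.le]
    calc ‖-ζ - d‖ ^ (e k * ((Q:ℕ):ℝ)) ≤ ‖-ζ - d‖ ^ (1:ℝ) :=
          Real.rpow_le_rpow_of_exponent_le hd1 (heQ k)
      _ = ‖-ζ - d‖ := Real.rpow_one _
  have hXqle : ∀ k, X k ^ (Q + 1) ≤ ‖-ζ - d‖ * X k := by
    intro k
    rw [pow_succ]
    exact mul_le_mul_of_nonneg_right (hXQle k) (hX0 k).le
  -- main induction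
  have key : ∀ k : ℕ, ‖x k‖ = X k ∧ ‖v k‖ ≤ ‖-b‖ * X k ∧
      ‖(-b) * (x k) ^ (Q+1) - (-ζ - d) * (v k) ^ (Q+1)‖ = ‖-b‖ * X k ∧
      ‖(-b) * x k - (-ζ - d) * v k‖ = ‖-b‖ * X k := by
    intro k
    induction k with
    | zero =>
      have hX00 : X 0 = 1 := by
        simp only [hX, he]
        norm_num
      rw [hx0, hv0, hX00]
      norm_num
    | succ k ih =>
      obtain ⟨Hx, Hv, Hy, -⟩ := ih
      have hnx : ‖(x k) ^ (Q+1)‖ = X k ^ (Q+1) := by rw [norm_pow, Hx]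
      have hTq : X (k+1) ^ (Q+1) = ‖-ζ - d‖ * X k := hXq k
      have hDX1 : (1:ℝ) ≤ ‖-ζ - d‖ * X k := le_trans hd1 (le_mul_of_one_le_right hD0.le (hX1 k))
      -- Step x
      have hidx : (-b) * (x (k+1) - (x (k+1)) ^ (Q+1)) =
          (-((-ζ - d) * ((-b) * (x k) ^ (Q+1) - (-ζ - d) * (v k) ^ (Q+1))))
            + (-((-b) * ζ * (x k) ^ (Q+1))) := by
        linear_combination (-b) * hrecx k + (v k) ^ (Q+1) * hdet - d * (v k) ^ (Q+1) * hsum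
      have hn1 : ‖-((-ζ - d) * ((-b) * (x k) ^ (Q+1) - (-ζ - d) * (v k) ^ (Q+1)))‖
          = ‖-ζ - d‖ * (‖-b‖ * X k) := by
        rw [norm_neg, norm_mul, Hy]
      have hn2 : ‖-((-b) * ζ * (x k) ^ (Q+1))‖ < ‖-ζ - d‖ * (‖-b‖ * X k) := by
        rw [norm_neg, norm_mul, norm_mul, hnx]
        calc ‖-b‖ * ‖ζ‖ * X k ^ (Q+1) ≤ ‖-b‖ * ‖ζ‖ * (‖-ζ - d‖ * X k) := by
              apply mul_le_mul_of_nonneg_left (hXqle k) (by positivity)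
          _ < ‖-b‖ * 1 * (‖-ζ - d‖ * X k) := by
              have h0 : (0:ℝ) < ‖-ζ - d‖ * X k := by positivity
              exact mul_lt_mul_of_pos_right (mul_lt_mul_of_pos_left hζ hB0) h0
          _ = ‖-ζ - d‖ * (‖-b‖ * X k) := by ring
      have hRx : ‖x (k+1) - (x (k+1)) ^ (Q+1)‖ = ‖-ζ - d‖ * X k := by
        have h := congrArg norm hidx
        rw [norm_mul, st17_add_eq (by rw [hn1]; exact hn2), hn1] at h
        have h' : ‖-b‖ * ‖x (k+1) - (x (k+1)) ^ (Q+1)‖ = ‖-b‖ * (‖-ζ - d‖ * X k) := by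
          rw [h]; ring
        exact mul_left_cancel₀ (ne_of_gt hB0) h'
      obtain ⟨hxpow, hxge1⟩ := st17_L1 (by omega) hRx hDX1
      have hx' : ‖x (k+1)‖ = X (k+1) := by
        have h1 : ‖x (k+1)‖ ^ (Q+1) = X (k+1) ^ (Q+1) := by rw [hxpow, hTq]
        exact le_antisymm (le_of_pow_le_pow_left₀ (by omega) (hX0 (k+1)).le h1.le)
          (le_of_pow_le_pow_left₀ (by omega) (norm_nonneg _) h1.ge)
      -- Step v
      have hidv : v (k+1) - (v (k+1)) ^ (Q+1) =
          (-((-b) * (x k) ^ (Q+1) - (-ζ - d) * (v k) ^ (Q+1)))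
            + (-(ζ * (v k) ^ (Q+1))) := by
        linear_combination hrecv k + (v k) ^ (Q+1) * hsum
      have hBT0 : (0:ℝ) < ‖-b‖ * X (k+1) := by positivity
      have hBT1 : (1:ℝ) ≤ ‖-b‖ * X (k+1) := le_trans hB1 (le_mul_of_one_le_right hB0.le (hX1 (k+1)))
      have hMv : ‖v (k+1) - (v (k+1)) ^ (Q+1)‖ ≤ (‖-b‖ * X (k+1)) ^ (Q+1) := by
        rw [hidv]
        refine (IsUltrametricDist.norm_add_le_max _ _).trans (max_le ?_ ?_)
        · rw [norm_neg, Hy, mul_pow, hTq]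
          calc ‖-b‖ * X k ≤ ‖-b‖ ^ (Q+1) * X k :=
                mul_le_mul_of_nonneg_right (le_self_pow₀ hB1 (by omega)) (hX0 k).le
            _ ≤ ‖-b‖ ^ (Q+1) * (‖-ζ - d‖ * X k) := by
                have h1 : X k ≤ ‖-ζ - d‖ * X k := le_mul_of_one_le_left (hX0 k).le hd1
                exact mul_le_mul_of_nonneg_left h1 (by positivity)
        · rw [norm_neg, norm_mul, norm_pow]
          calc ‖ζ‖ * ‖v k‖ ^ (Q+1) ≤ 1 * (‖-b‖ * X k) ^ (Q+1) :=
                mul_le_mul hζ.le (pow_le_pow_left₀ (norm_nonneg _) Hv _)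
                  (by positivity) zero_le_one
            _ = ‖-b‖ ^ (Q+1) * X k ^ (Q+1) := by rw [one_mul, mul_pow]
            _ ≤ ‖-b‖ ^ (Q+1) * (‖-ζ - d‖ * X k) :=
                mul_le_mul_of_nonneg_left (hXqle k) (by positivity)
            _ = (‖-b‖ * X (k+1)) ^ (Q+1) := by rw [mul_pow, hTq]
      have hv' : ‖v (k+1)‖ ≤ ‖-b‖ * X (k+1) := by
        have h := st17_L2 (by omega) hMv (one_le_pow₀ hBT1)
        exact le_of_pow_le_pow_left₀ (by omega) hBT0.le h
      -- Step w
      have frob : ((-b) * x (k+1) - (-ζ - d) * v (k+1)) ^ (Q+1)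
          = (-b) ^ (Q+1) * (x (k+1)) ^ (Q+1) - (-ζ - d) ^ (Q+1) * (v (k+1)) ^ (Q+1) := by
        rw [frobeq, mul_pow, mul_pow]
      have hidw : ((-b) * x (k+1) - (-ζ - d) * v (k+1)) ^ (Q+1)
            - (-ζ - d) ^ Q * ((-b) * x (k+1) - (-ζ - d) * v (k+1))
          = (-b) * ((-b) ^ Q - (-ζ - d) ^ Q) * (x (k+1)) ^ (Q+1)
            + (-ζ - d) ^ Q * (ζ * ((-b) * (x k) ^ (Q+1) - (-ζ - d) * (v k) ^ (Q+1))) := by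
        linear_combination frob - (-ζ - d) ^ Q * (-b) * hrecx k
          + (-ζ - d) ^ Q * (-ζ - d) * hrecv k
          + (-ζ - d) ^ Q * (v k) ^ (Q+1) * hdet
          - (-ζ - d) ^ Q * d * (v k) ^ (Q+1) * hsum
          + (-ζ - d) ^ Q * (v k) ^ (Q+1) * ((d - ζ) * hsum - 2 * hdet)
      have hS : ‖((-b) * x (k+1) - (-ζ - d) * v (k+1)) ^ (Q+1)
            - (-ζ - d) ^ Q * ((-b) * x (k+1) - (-ζ - d) * v (k+1))‖
          = (‖-b‖ * X (k+1)) ^ (Q+1) := by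
        rw [hidw]
        have hA1 : ‖(-b) * ((-b) ^ Q - (-ζ - d) ^ Q) * (x (k+1)) ^ (Q+1)‖
            = (‖-b‖ * X (k+1)) ^ (Q+1) := by
          rw [norm_mul, norm_mul, hbd, norm_pow, hx', mul_pow]
          ring
        have hA2 : ‖(-ζ - d) ^ Q * (ζ * ((-b) * (x k) ^ (Q+1) - (-ζ - d) * (v k) ^ (Q+1)))‖
            < (‖-b‖ * X (k+1)) ^ (Q+1) := by
          rw [norm_mul, norm_pow, norm_mul, Hy]
          calc ‖-ζ - d‖ ^ Q * (‖ζ‖ * (‖-b‖ * X k))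
              < ‖-ζ - d‖ ^ Q * (1 * (‖-b‖ * X k)) := by
                have h0 : (0:ℝ) < ‖-ζ - d‖ ^ Q := by positivity
                have h1 : ‖ζ‖ * (‖-b‖ * X k) < 1 * (‖-b‖ * X k) := by
                  apply mul_lt_mul_of_pos_right hζ (by positivity)
                exact mul_lt_mul_of_pos_left h1 h0
            _ = ‖-ζ - d‖ ^ Q * ‖-b‖ * X k := by ring
            _ ≤ ‖-b‖ ^ Q * ‖-b‖ * X k := by
                have h1 : ‖-ζ - d‖ ^ Q ≤ ‖-b‖ ^ Q := pow_le_pow_left₀ hD0.le hdb Q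
                have h2 : (0:ℝ) ≤ ‖-b‖ * X k := by positivity
                nlinarith
            _ ≤ ‖-b‖ ^ (Q+1) * (‖-ζ - d‖ * X k) := by
                rw [pow_succ]
                have h1 : X k ≤ ‖-ζ - d‖ * X k := le_mul_of_one_le_left (hX0 k).le hd1
                have h2 : (0:ℝ) ≤ ‖-b‖ ^ Q * ‖-b‖ := by positivity
                calc ‖-b‖ ^ Q * ‖-b‖ * X k ≤ ‖-b‖ ^ Q * ‖-b‖ * (‖-ζ - d‖ * X k) :=
                      mul_le_mul_of_nonneg_left h1 h2
                  _ = ‖-b‖ ^ Q * ‖-b‖ * (‖-ζ - d‖ * X k) := rfl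
            _ = (‖-b‖ * X (k+1)) ^ (Q+1) := by rw [mul_pow, hTq]
        rw [st17_add_eq (by rw [hA1]; exact hA2), hA1]
      have hw' : ‖(-b) * x (k+1) - (-ζ - d) * v (k+1)‖ = ‖-b‖ * X (k+1) := by
        set w : F := (-b) * x (k+1) - (-ζ - d) * v (k+1) with hwdef
        rcases lt_trichotomy ‖w‖ (‖-b‖ * X (k+1)) with hlt | heqw | hgt
        · exfalso
          have h1 : ‖w ^ (Q+1)‖ < (‖-b‖ * X (k+1)) ^ (Q+1) := by
            rw [norm_pow]
            exact pow_lt_pow_left₀ hlt (norm_nonneg _) (by omega)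
          have h2 : ‖(-ζ - d) ^ Q * w‖ < (‖-b‖ * X (k+1)) ^ (Q+1) := by
            rw [norm_mul, norm_pow, pow_succ']
            have hDQ : ‖-ζ - d‖ ^ Q ≤ (‖-b‖ * X (k+1)) ^ Q := by
              apply pow_le_pow_left₀ hD0.le
              calc ‖-ζ - d‖ ≤ ‖-b‖ := hdb
                _ ≤ ‖-b‖ * X (k+1) := le_mul_of_one_le_right hB0.le (hX1 (k+1))
            calc ‖-ζ - d‖ ^ Q * ‖w‖ ≤ (‖-b‖ * X (k+1)) ^ Q * ‖w‖ :=
                  mul_le_mul_of_nonneg_right hDQ (norm_nonneg _)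
              _ < (‖-b‖ * X (k+1)) ^ Q * (‖-b‖ * X (k+1)) :=
                  mul_lt_mul_of_pos_left hlt (by positivity)
              _ = (‖-b‖ * X (k+1)) * (‖-b‖ * X (k+1)) ^ Q := by ring
          have h3 : ‖w ^ (Q+1) - (-ζ - d) ^ Q * w‖ < (‖-b‖ * X (k+1)) ^ (Q+1) := by
            rw [sub_eq_add_neg]
            refine lt_of_le_of_lt (IsUltrametricDist.norm_add_le_max _ _) ?_
            rw [norm_neg]
            exact max_lt h1 h2
          rw [hS] at h3
          exact lt_irrefl _ h3
        · exact heqw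
        · exfalso
          have hBT' : (0:ℝ) ≤ ‖-b‖ * X (k+1) := hBT0.le
          have h1 : ‖(-ζ - d) ^ Q * w‖ < ‖w ^ (Q+1)‖ := by
            rw [norm_mul, norm_pow, norm_pow, pow_succ]
            apply mul_lt_mul_of_pos_right ?_ (hBT0.trans hgt)
            calc ‖-ζ - d‖ ^ Q ≤ (‖-b‖ * X (k+1)) ^ Q := by
                  apply pow_le_pow_left₀ hD0.le
                  calc ‖-ζ - d‖ ≤ ‖-b‖ := hdb
                    _ ≤ ‖-b‖ * X (k+1) := le_mul_of_one_le_right hB0.le (hX1 (k+1))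
              _ < ‖w‖ ^ Q := pow_lt_pow_left₀ hgt hBT' (by omega)
          have h2 : ‖w ^ (Q+1) - (-ζ - d) ^ Q * w‖ = ‖w‖ ^ (Q+1) := by
            rw [st17_sub_eq h1, norm_pow]
          rw [hS] at h2
          have h3 : (‖-b‖ * X (k+1)) ^ (Q+1) < ‖w‖ ^ (Q+1) :=
            pow_lt_pow_left₀ hgt hBT' (by omega)
          rw [h2] at h3
          exact lt_irrefl _ h3
      -- Step y
      have hidy : (-b) * (x (k+1)) ^ (Q+1) - (-ζ - d) * (v (k+1)) ^ (Q+1)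
          = ((-b) * x (k+1) - (-ζ - d) * v (k+1))
            + ζ * ((-b) * (x k) ^ (Q+1) - (-ζ - d) * (v k) ^ (Q+1)) := by
        linear_combination (-(-b)) * hrecx k + (-ζ - d) * hrecv k
          - (v k) ^ (Q+1) * hdet - ζ * (v k) ^ (Q+1) * hsum
      have hy' : ‖(-b) * (x (k+1)) ^ (Q+1) - (-ζ - d) * (v (k+1)) ^ (Q+1)‖
          = ‖-b‖ * X (k+1) := by
        rw [hidy, st17_add_eq ?_, hw']
        rw [hw', norm_mul, Hy]
        calc ‖ζ‖ * (‖-b‖ * X k) < 1 * (‖-b‖ * X k) :=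
              mul_lt_mul_of_pos_right hζ (by positivity)
          _ = ‖-b‖ * X k := one_mul _
          _ ≤ ‖-b‖ * X (k+1) := mul_le_mul_of_nonneg_left (hXmono k) hB0.le
      exact ⟨hx', hv', hy', hw'⟩
  refine ⟨fun k => ⟨?_, ?_, ?_, ?_⟩, ?_⟩
  · rw [(key k).1, hX]
  · rw [(key k).1]; exact hX1 k
  · rw [(key k).1]; exact (key k).2.1
  · rw [(key k).1]; exact (key k).2.2.2
  · intro h
    have h1 := NormedAddCommGroup.tendsto_nhds_zero.mp h 1 one_pos
    obtain ⟨k, hk⟩ := (h1.and (Filter.eventually_ge_atTop 0)).exists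
    have h2 : (1:ℝ) ≤ ‖x k‖ := by rw [(key k).1]; exact hX1 k
    linarith [hk.1]
end

section
/- Let q be a power of a prime p and let F be an algebraically closed field containing 𝔽_q. Let V be a finite-dimensional F-vector space and let τ : V → V be an additive bijection satisfying τ(λ·v) = λ^q·τ(v) for all λ ∈ F, v ∈ V. Then the set of invariants V^τ := {v ∈ V : τ(v) = v} is an 𝔽_q-subspace of V, the natural F-linear map F ⊗_{𝔽_q} V^τ → V induced by multiplication is an isomorphism, and in particular dim_{𝔽_q} V^τ = dim_F V. -/
open scoped TensorProduct
open Polynomial Module Submodule Function Finset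

open Polynomial Module Submodule Function Finset

section AuxRoots
variable {F : Type} [Field F] [IsAlgClosed F]

lemma aux_pow_root {q : ℕ} (hq : 2 ≤ q) (c : F) : ∃ a : F, a ^ q = c :=
  IsAlgClosed.exists_pow_nat_eq c (by omega)

lemma aux_AS {q : ℕ} (hq : 2 ≤ q) (c : F) : ∃ a : F, a ^ q = a + c := by
  have hlt : degree ((X : F[X]) + C c) < degree ((X : F[X]) ^ q) := by
    rw [degree_X_add_C, degree_X_pow]
    exact_mod_cast (by omega : 1 < q)
  have hdeg : degree ((X : F[X]) ^ q - (X + C c)) ≠ 0 := by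
    rw [degree_sub_eq_left_of_degree_lt hlt, degree_X_pow]
    exact_mod_cast (by omega : q ≠ 0)
  obtain ⟨a, ha⟩ := IsAlgClosed.exists_root _ hdeg
  refine ⟨a, ?_⟩
  have := ha
  simp only [IsRoot, eval_sub, eval_add, eval_pow, eval_X, eval_C] at this
  rwa [sub_eq_zero] at this
end AuxRoots

section AuxCount
variable {K F : Type} [Field K] [Field F] [Algebra K F] [Finite K]

lemma aux_mem_range {q : ℕ} (hq2 : 2 ≤ q) (hcard : Nat.card K = q) {x : F}
    (hx : x ^ q = x) : ∃ α : K, algebraMap K F α = x := by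
  classical
  haveI : Fintype K := Fintype.ofFinite K
  have hcard' : Fintype.card K = q := by rw [← Nat.card_eq_fintype_card, hcard]
  set g : F[X] := X ^ q - X with hg
  have hlt : degree ((X : F[X])) < degree ((X : F[X]) ^ q) := by
    rw [degree_X, degree_X_pow]
    exact_mod_cast (by omega : 1 < q)
  have hdeg : g.degree = (q : ℕ) := by rw [hg, degree_sub_eq_left_of_degree_lt hlt, degree_X_pow]
  have hg0 : g ≠ 0 := fun h => by simp [h] at hdeg
  have hnat : g.natDegree = q := natDegree_eq_of_degree_eq_some hdeg
  set s : Finset F := Finset.univ.image (algebraMap K F) with hs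
  have hscard : s.card = q := by
    rw [hs, Finset.card_image_of_injective _ (algebraMap K F).injective, Finset.card_univ, hcard']
  have hsub : s ⊆ g.roots.toFinset := by
    intro y hy
    rw [hs, Finset.mem_image] at hy
    obtain ⟨α, -, rfl⟩ := hy
    rw [Multiset.mem_toFinset, mem_roots hg0]
    have : α ^ q = α := by rw [← hcard']; exact FiniteField.pow_card α
    simp [hg, IsRoot, ← map_pow, this]
  have hle : g.roots.toFinset.card ≤ q := by
    calc g.roots.toFinset.card ≤ Multiset.card g.roots := Multiset.toFinset_card_le _
    _ ≤ g.natDegree := g.card_roots' |>.trans (le_of_eq rfl)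
    _ = q := hnat
  have heq : s = g.roots.toFinset := Finset.eq_of_subset_of_card_le hsub (by omega)
  have hxmem : x ∈ g.roots.toFinset := by
    rw [Multiset.mem_toFinset, mem_roots hg0]
    simp [hg, IsRoot, hx]
  rw [← heq, hs, Finset.mem_image] at hxmem
  obtain ⟨α, -, hα⟩ := hxmem
  exact ⟨α, hα⟩
end AuxCount

section Core
variable {F : Type} [Field F] [IsAlgClosed F] {q : ℕ} {σ : F →+* F}
variable {V : Type} [AddCommGroup V] [Module F V]

lemma aux_exists_fixed (hq2 : 2 ≤ q) (hq0 : (q : F) = 0) (hσ : ∀ x : F, σ x = x ^ q)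
    [FiniteDimensional F V] (T : V →ₛₗ[σ] V) (hT : Function.Bijective T)
    {v : V} (hv : v ≠ 0) : ∃ x : V, x ≠ 0 ∧ T x = x := by
  classical
  have hq1 : q ≠ 0 := by omega
  set g : ℕ → V := fun k => (⇑T)^[k] v with hg
  have hgsucc : ∀ k, T (g k) = g (k + 1) := fun k => (Function.iterate_succ_apply' (⇑T) k v).symm
  set Q : ℕ → Prop := fun m => g m ∈ span F (Set.range fun k : Fin m => g (k : ℕ)) with hQdef
  -- any ℕ-indexed combination lies in the Fin-range span
  have hspan_mem : ∀ (m : ℕ) (c : ℕ → F),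
      (∑ k ∈ Finset.range m, c k • g k) ∈ span F (Set.range fun k : Fin m => g (k : ℕ)) := by
    intro m c
    rw [Finset.sum_range fun k => c k • g k]
    exact Submodule.sum_mem _ fun i _ => Submodule.smul_mem _ _ (Submodule.subset_span ⟨i, rfl⟩)
  have hex : ∃ m, Q m := by
    by_contra hnone
    push_neg at hnone
    have hind : ∀ m : ℕ, LinearIndependent F (fun k : Fin m => g (k : ℕ)) := by
      intro m
      induction m with
      | zero => exact linearIndependent_empty_type
      | succ m ih =>
        have hsnoc : (fun k : Fin (m + 1) => g (k : ℕ)) =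
            Fin.snoc (fun k : Fin m => g (k : ℕ)) (g m) := by
          funext k
          refine Fin.lastCases ?_ ?_ k
          · simp [Fin.snoc_last]
          · intro i; simp [Fin.snoc_castSucc]
        rw [hsnoc, linearIndependent_fin_snoc]
        exact ⟨ih, hnone m⟩
    have hcard := (hind (finrank F V + 1)).fintype_card_le_finrank
    simp only [Fintype.card_fin] at hcard
    omega
  set m := Nat.find hex with hmdef
  have hQm : Q m := Nat.find_spec hex
  have hmin : ∀ k, k < m → ¬ Q k := fun k hk => Nat.find_min hex hk
  have hm0 : m ≠ 0 := by
    intro h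
    apply hv
    have h0 := hQm
    rw [h, hQdef] at h0
    simpa [hg, Set.range_eq_empty] using h0
  obtain ⟨m', hm'⟩ := Nat.exists_eq_succ_of_ne_zero hm0
  rw [Nat.succ_eq_add_one] at hm'
  -- coefficients of the dependence relation
  rw [hQdef, mem_span_range_iff_exists_fun] at hQm
  obtain ⟨aF, haF⟩ := hQm
  set a : ℕ → F := fun k => if h : k < m then aF ⟨k, h⟩ else 0 with ha
  have hgm : g m = ∑ k ∈ Finset.range m, a k • g k := by
    rw [Finset.sum_range fun k => a k • g k, ← haF]
    refine Finset.sum_congr rfl fun i _ => ?_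
    simp [ha, i.isLt]
  have hmm' : m' < m := by omega
  -- a 0 ≠ 0
  have ha0 : a 0 ≠ 0 := by
    intro h0
    choose b hb using fun k : ℕ => aux_pow_root hq2 (a k)
    have key : T (g m' - ∑ k ∈ Finset.range m', b (k + 1) • g k) = 0 := by
      rw [map_sub, map_sum, hgsucc, ← hm']
      have hterm : ∀ k ∈ Finset.range m', T (b (k + 1) • g k) = a (k + 1) • g (k + 1) := by
        intro k _
        rw [LinearMap.map_smulₛₗ, hσ, hb, hgsucc]
      rw [Finset.sum_congr rfl hterm, sub_eq_zero, hgm, hm', Finset.sum_range_succ']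
      simp [h0]
    have hzero : g m' - ∑ k ∈ Finset.range m', b (k + 1) • g k = 0 := by
      apply hT.injective
      rw [key, map_zero]
    have : g m' = ∑ k ∈ Finset.range m', b (k + 1) • g k := by
      rwa [sub_eq_zero] at hzero
    refine hmin m' hmm' ?_
    show g m' ∈ span F (Set.range fun k : Fin m' => g (k : ℕ))
    rw [this]
    exact hspan_mem m' fun k => b (k + 1)
  -- polynomial family
  set pp : ℕ → F[X] := fun k =>
    Nat.rec (C (a 0) * X ^ q) (fun k ih => ih ^ q + C (a (k + 1)) * X ^ q) k with hpp
  have hpp0 : pp 0 = C (a 0) * X ^ q := rfl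
  have hpps : ∀ k, pp (k + 1) = (pp k) ^ q + C (a (k + 1)) * X ^ q := fun k => rfl
  have hCq : (C ((q : ℕ) : F) : F[X]) = 0 := by rw [hq0, C_0]
  have hder : ∀ k, derivative (pp k) = 0 := by
    intro k
    induction k with
    | zero => rw [hpp0]; simp [derivative_X_pow, hq0]
    | succ k ih =>
      rw [hpps, derivative_add, derivative_pow, ih]
      simp [derivative_X_pow, hq0]
  have heval0 : ∀ k, eval 0 (pp k) = 0 := by
    intro k
    induction k with
    | zero => simp [hpp0, zero_pow hq1]
    | succ k ih => simp [hpps, ih, zero_pow hq1]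
  have hcoeff1 : ∀ k, (pp k).coeff 1 = 0 := by
    intro k
    have h := congrArg (fun f : F[X] => f.coeff 0) (hder k)
    simpa [coeff_derivative] using h
  have hdeg : ∀ k, pp k ≠ 0 ∧ (pp k).natDegree = q ^ (k + 1) := by
    intro k
    induction k with
    | zero =>
      constructor
      · exact mul_ne_zero (C_ne_zero.mpr ha0) (pow_ne_zero _ X_ne_zero)
      · rw [hpp0, natDegree_C_mul_X_pow q (a 0) ha0, pow_one]
    | succ k ih =>
      obtain ⟨h1, h2⟩ := ih
      have hlc : (pp k).leadingCoeff ^ q ≠ 0 :=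
        pow_ne_zero _ (leadingCoeff_ne_zero.mpr h1)
      have hppow : ((pp k) ^ q).natDegree = q ^ (k + 2) := by
        rw [natDegree_pow' hlc, h2, ← pow_succ']
      have hlt : (C (a (k + 1)) * X ^ q).natDegree < ((pp k) ^ q).natDegree := by
        rw [hppow]
        calc (C (a (k + 1)) * X ^ q).natDegree ≤ q := natDegree_C_mul_X_pow_le _ _
        _ < q ^ (k + 2) := by
            calc q = q ^ 1 := (pow_one q).symm
            _ < q ^ (k + 2) := Nat.pow_lt_pow_right (by omega) (by omega)
      constructor
      · intro hzero
        rw [hpps] at hzero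
        have : (pp k) ^ q = -(C (a (k + 1)) * X ^ q) := eq_neg_of_add_eq_zero_left hzero
        have := congrArg natDegree this
        rw [hppow, natDegree_neg] at this
        omega
      · rw [hpps, natDegree_add_eq_left_of_natDegree_lt hlt, hppow]
  -- the one-variable polynomial P and its divX
  set P : F[X] := pp m' - X with hP
  have hP1 : P.coeff 1 = -1 := by
    rw [hP, coeff_sub, hcoeff1, coeff_X_one, zero_sub]
  have hP0 : P.coeff 0 = 0 := by
    rw [hP, coeff_sub, coeff_X_zero, sub_zero, coeff_zero_eq_eval_zero, heval0]
  have hXlt : (X : F[X]).natDegree < (pp m').natDegree := by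
    rw [natDegree_X, (hdeg m').2]
    calc 1 < q := by omega
    _ ≤ q ^ (m' + 1) := Nat.le_self_pow (by omega) q
  have hPdeg : P.natDegree = q ^ (m' + 1) := by
    rw [hP, natDegree_sub_eq_left_of_natDegree_lt hXlt, (hdeg m').2]
  have hPne : P ≠ 0 := by
    intro h
    rw [h, natDegree_zero] at hPdeg
    have : 2 ≤ q ^ (m' + 1) := le_trans hq2 (Nat.le_self_pow (by omega) q)
    omega
  set R : F[X] := P.divX with hR
  have hRX : R * X = P := by
    have := P.divX_mul_X_add
    rwa [hP0, C_0, add_zero] at this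
  have hR0 : R.coeff 0 = -1 := by rw [hR, coeff_divX, hP1]
  have hRne : R ≠ 0 := by
    intro h
    rw [h, coeff_zero] at hR0
    exact (by norm_num : (0 : F) ≠ -1) hR0
  have hRdeg : R.degree ≠ 0 := by
    have hnat : R.natDegree = q ^ (m' + 1) - 1 := by
      rw [hR, natDegree_divX_eq_natDegree_tsub_one, hPdeg]
    have hpos : 0 < R.natDegree := by
      rw [hnat]
      have : 2 ≤ q ^ (m' + 1) := le_trans hq2 (Nat.le_self_pow (by omega) q)
      omega
    rw [degree_eq_natDegree hRne]
    exact_mod_cast Nat.pos_iff_ne_zero.mp hpos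
  obtain ⟨t, ht⟩ := IsAlgClosed.exists_root R hRdeg
  have htne : t ≠ 0 := by
    intro h
    rw [h] at ht
    rw [IsRoot, ← coeff_zero_eq_eval_zero, hR0] at ht
    exact (by norm_num : (-1 : F) ≠ 0) ht
  have hPt : eval t P = 0 := by
    rw [← hRX, eval_mul, eval_X, ht.eq_zero, zero_mul]
  have hppt : eval t (pp m') = t := by
    have := hPt
    rw [hP, eval_sub, eval_X, sub_eq_zero] at this
    exact this
  -- the coefficients
  set c : ℕ → F := fun k => eval t (pp k) with hc
  have hc0 : c 0 = a 0 * t ^ q := by simp [hc, hpp0]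
  have hcs : ∀ k, c (k + 1) = (c k) ^ q + a (k + 1) * t ^ q := by
    intro k; simp [hc, hpps]
  have hcm : c m' = t := hppt
  set x : V := ∑ k ∈ Finset.range m, c k • g k with hx
  refine ⟨x, ?_, ?_⟩
  · -- x ≠ 0
    intro hxz
    rw [hx, hm', Finset.sum_range_succ, hcm] at hxz
    have hgm' : g m' = ∑ k ∈ Finset.range m', (-(t⁻¹ * c k)) • g k := by
      have h1 : t • g m' = -∑ k ∈ Finset.range m', c k • g k :=
        eq_neg_of_add_eq_zero_right hxz
      have h2 : g m' = t⁻¹ • (t • g m') := (inv_smul_smul₀ htne _).symm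
      rw [h2, h1, smul_neg, Finset.smul_sum]
      rw [← Finset.sum_neg_distrib]
      refine Finset.sum_congr rfl fun k _ => ?_
      rw [smul_smul, neg_smul]
    refine hmin m' hmm' ?_
    show g m' ∈ span F (Set.range fun k : Fin m' => g (k : ℕ))
    rw [hgm']
    exact hspan_mem m' _
  · -- T x = x
    have hTx : T x = ∑ k ∈ Finset.range m, (c k) ^ q • g (k + 1) := by
      rw [hx, map_sum]
      refine Finset.sum_congr rfl fun k _ => ?_
      rw [LinearMap.map_smulₛₗ, hσ, hgsucc]
    have hgm2 : g (m' + 1) = ∑ k ∈ Finset.range m', a (k + 1) • g (k + 1) + a 0 • g 0 := by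
      rw [← hm', hgm, hm', Finset.sum_range_succ']
    calc T x = ∑ k ∈ Finset.range m, (c k) ^ q • g (k + 1) := hTx
    _ = ∑ k ∈ Finset.range m', (c k) ^ q • g (k + 1) + (c m') ^ q • g (m' + 1) := by
        rw [hm', Finset.sum_range_succ]
    _ = ∑ k ∈ Finset.range m', (c k) ^ q • g (k + 1) +
        t ^ q • (∑ k ∈ Finset.range m', a (k + 1) • g (k + 1) + a 0 • g 0) := by
        rw [hcm, hgm2]
    _ = ∑ k ∈ Finset.range m', ((c k) ^ q + t ^ q * a (k + 1)) • g (k + 1) +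
        (t ^ q * a 0) • g 0 := by
        rw [smul_add, ← add_assoc, Finset.smul_sum, ← Finset.sum_add_distrib, smul_smul]
        congr 1
        refine Finset.sum_congr rfl fun k _ => ?_
        rw [smul_smul, ← add_smul]
    _ = ∑ k ∈ Finset.range m', c (k + 1) • g (k + 1) + c 0 • g 0 := by
        rw [hc0, mul_comm (a 0)]
        refine congrArg₂ (· + ·) (Finset.sum_congr rfl fun k _ => ?_) rfl
        rw [hcs, mul_comm (a (k + 1))]
    _ = ∑ k ∈ Finset.range (m' + 1), c k • g k := (Finset.sum_range_succ' (fun k => c k • g k) m').symm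
    _ = x := by rw [hx, hm']
end Core


section Core2
variable {F : Type} [Field F] [IsAlgClosed F] {q : ℕ} {σ : F →+* F}

lemma aux_span_fixed (hq2 : 2 ≤ q) (hq0 : (q : F) = 0) (hσ : ∀ x : F, σ x = x ^ q) :
    ∀ (d : ℕ) (V : Type) [AddCommGroup V] [Module F V] [FiniteDimensional F V],
      finrank F V = d → ∀ T : V →ₛₗ[σ] V, Function.Bijective T →
      span F {u | T u = u} = ⊤ := by
  intro d
  induction d with
  | zero =>
    intro V _ _ _ hrank T _
    have : Subsingleton V := finrank_zero_iff.mp hrank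
    exact Subsingleton.elim _ _
  | succ d ih =>
    intro V _ _ _ hrank T hT
    have hnt : Nontrivial V := Module.nontrivial_of_finrank_pos (R := F) (by omega)
    obtain ⟨v0, hv0⟩ := exists_ne (0 : V)
    obtain ⟨e, he0, hTe⟩ := aux_exists_fixed hq2 hq0 hσ T hT hv0
    set W : Submodule F V := F ∙ e with hW
    have heW : e ∈ W := Submodule.mem_span_singleton_self e
    have hWle : W ≤ W.comap T := by
      intro w hw
      rw [hW, Submodule.mem_span_singleton] at hw
      obtain ⟨l, rfl⟩ := hw
      rw [Submodule.mem_comap, LinearMap.map_smulₛₗ, hTe]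
      exact Submodule.smul_mem _ _ heW
    set Tbar : (V ⧸ W) →ₛₗ[σ] (V ⧸ W) := Submodule.mapQ W W T hWle with hTbar
    have hTbar_mk : ∀ x : V, Tbar (Submodule.Quotient.mk x) = Submodule.Quotient.mk (T x) := by
      intro x
      rw [hTbar]
      exact Submodule.mapQ_apply W W T x
    have hTbar_bij : Function.Bijective Tbar := by
      constructor
      · intro x y hxy
        obtain ⟨x, rfl⟩ := Submodule.Quotient.mk_surjective W x
        obtain ⟨y, rfl⟩ := Submodule.Quotient.mk_surjective W y
        rw [hTbar_mk, hTbar_mk] at hxy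
        have hmem : T x - T y ∈ W := (Submodule.Quotient.eq W).mp hxy
        rw [hW, Submodule.mem_span_singleton] at hmem
        obtain ⟨l, hl⟩ := hmem
        obtain ⟨s, hs⟩ := aux_pow_root hq2 l
        have hTsx : T (y + s • e) = T x := by
          rw [map_add, LinearMap.map_smulₛₗ, hσ, hTe, hs, hl]
          abel
        have hyx : y + s • e = x := hT.injective hTsx
        rw [Submodule.Quotient.eq]
        rw [← hyx]
        have : y + s • e - y = s • e := by abel
        rw [this]
        exact Submodule.smul_mem _ _ heW
      · intro y
        obtain ⟨y, rfl⟩ := Submodule.Quotient.mk_surjective W y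
        obtain ⟨x, hx⟩ := hT.surjective y
        exact ⟨Submodule.Quotient.mk x, by rw [hTbar_mk, hx]⟩
    have hW1 : finrank F W = 1 := finrank_span_singleton he0
    have hrankQ : finrank F (V ⧸ W) = d := by
      have := Submodule.finrank_quotient_add_finrank W
      omega
    have hspanQ := ih (V ⧸ W) hrankQ Tbar hTbar_bij
    set U : Submodule F V := span F {u : V | T u = u} with hU
    have heU : e ∈ U := subset_span hTe
    have hWU : W ≤ U := by
      rw [hW, Submodule.span_singleton_le_iff_mem]; exact heU
    have hlift : {u : V ⧸ W | Tbar u = u} ⊆ (U.map W.mkQ : Set (V ⧸ W)) := by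
      intro ubar hubar
      obtain ⟨w, rfl⟩ := Submodule.Quotient.mk_surjective W ubar
      have hmem : T w - w ∈ W := by
        have := hubar
        rw [Set.mem_setOf_eq, hTbar_mk] at this
        exact (Submodule.Quotient.eq W).mp this
      rw [hW, Submodule.mem_span_singleton] at hmem
      obtain ⟨l, hl⟩ := hmem
      obtain ⟨s, hs⟩ := aux_AS hq2 (-l)
      have hTw : T w = w + l • e := by rw [hl]; abel
      refine ⟨w + s • e, ?_, ?_⟩
      · apply subset_span
        show T (w + s • e) = w + s • e
        rw [map_add, LinearMap.map_smulₛₗ, hσ, hTe, hs, hTw]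
        module
      · have hmk : W.mkQ (s • e) = 0 := (Submodule.Quotient.mk_eq_zero W).mpr
          (Submodule.smul_mem _ _ heW)
        rw [map_add, hmk, add_zero]
        rfl
    have hmap : U.map W.mkQ = ⊤ := by
      rw [eq_top_iff, ← hspanQ, Submodule.span_le]
      exact hlift
    rw [eq_top_iff]
    intro v _
    have hvmem : W.mkQ v ∈ U.map W.mkQ := by rw [hmap]; trivial
    obtain ⟨u, hu, huv⟩ := hvmem
    have hsub : u - v ∈ W := by
      rw [← Submodule.Quotient.eq W]
      exact huv
    have : u - (u - v) ∈ U := Submodule.sub_mem U hu (hWU hsub)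
    rwa [sub_sub_cancel] at this
end Core2

/-- the `q`-power Frobenius ring endomorphism -/
def frobQ (F : Type) [Field F] (q : ℕ) (h1 : q ≠ 0)
    (h2 : ∀ a b : F, (a + b) ^ q = a ^ q + b ^ q) : F →+* F where
  toFun a := a ^ q
  map_one' := one_pow q
  map_mul' a b := mul_pow a b q
  map_zero' := zero_pow h1
  map_add' := h2

@[simp] lemma frobQ_apply (F : Type) [Field F] (q : ℕ) (h1 : q ≠ 0)
    (h2 : ∀ a b : F, (a + b) ^ q = a ^ q + b ^ q) (a : F) :
    frobQ F q h1 h2 a = a ^ q := rfl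

set_option synthInstance.maxHeartbeats 1000000 in
set_option maxHeartbeats 1000000 in
/-- Let `q = pⁿ` and let `F ⊇ 𝔽_q` be an algebraically closed field.  Let `V`
be a finite-dimensional `F`-vector space and `τ : V → V` an additive bijection with
`τ(λv) = λ^q τ(v)`.  Then the set of invariants `V^τ = {v : τ v = v}` is an `𝔽_q`-subspace of
`V`, the natural `F`-linear map `F ⊗_{𝔽_q} V^τ → V` induced by multiplication is an
isomorphism, and in particular `dim_{𝔽_q} V^τ = dim_F V`. -/
theorem statement19
    (p n q : ℕ) [Fact p.Prime] (hn : n ≠ 0) (hq : q = p ^ n)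
    (F : Type) [Field F] [IsAlgClosed F] [Algebra (GaloisField p n) F]
    (V : Type) [AddCommGroup V] [Module F V] [FiniteDimensional F V]
    [Module (GaloisField p n) V] [IsScalarTower (GaloisField p n) F V]
    (τ : V → V)
    (hadd : ∀ x y : V, τ (x + y) = τ x + τ y)
    (hsl : ∀ (l : F) (v : V), τ (l • v) = l ^ q • τ v)
    (hbij : Function.Bijective τ)
    (Vτ : Submodule (GaloisField p n) V) (hVτ : ∀ v, v ∈ Vτ ↔ τ v = v)
    (μ : (F ⊗[GaloisField p n] ↥Vτ) →ₗ[F] V)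
    (hμ : ∀ (f : F) (x : ↥Vτ), μ (f ⊗ₜ x) = f • (x : V)) :
    (∀ (α : GaloisField p n) (v : V), τ v = v → τ (α • v) = α • v) ∧
    Function.Bijective μ ∧
    Module.finrank (GaloisField p n) ↥Vτ = Module.finrank F V := by
  classical
  set K := GaloisField p n with hK
  haveI : CharP F p := charP_of_injective_algebraMap (algebraMap K F).injective p
  have hp2 : 2 ≤ p := (Fact.out : p.Prime).two_le
  have hq2 : 2 ≤ q := by
    rw [hq]
    calc 2 ≤ p := hp2
    _ = p ^ 1 := (pow_one p).symm
    _ ≤ p ^ n := Nat.pow_le_pow_right (by omega) (by omega)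
  have hq1 : q ≠ 0 := by omega
  have hq0 : (q : F) = 0 := by
    rw [hq, Nat.cast_pow, CharP.cast_eq_zero F p, zero_pow hn]
  have hfrobadd : ∀ a b : F, (a + b) ^ q = a ^ q + b ^ q := by
    intro a b
    rw [hq]
    exact add_pow_char_pow a b p n
  set σ : F →+* F := frobQ F q hq1 hfrobadd with hσdef
  have hσ : ∀ x : F, σ x = x ^ q := fun x => rfl
  set T : V →ₛₗ[σ] V :=
    { toFun := τ
      map_add' := hadd
      map_smul' := fun l v => by
        show τ (l • v) = σ l • τ v
        rw [hσ]
        exact hsl l v } with hTdef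
  have hTapp : ∀ w : V, T w = τ w := fun _ => rfl
  -- the fixed points over K
  have hKfin : Finite K := inferInstance
  have hKcard : Nat.card K = q := by rw [hq, hK]; exact GaloisField.card p n hn
  have hfixK : ∀ α : K, α ^ q = α := by
    intro α
    haveI : Fintype K := Fintype.ofFinite K
    have : Fintype.card K = q := by rw [← Nat.card_eq_fintype_card, hKcard]
    rw [← this]
    exact FiniteField.pow_card α
  -- part 1
  have part1 : ∀ (α : K) (v : V), τ v = v → τ (α • v) = α • v := by
    intro α v hv
    have h1 : α • v = algebraMap K F α • v := (IsScalarTower.algebraMap_smul F α v).symm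
    rw [h1, hsl, ← map_pow, hfixK, hv]
  -- spanning
  have hspan : span F {u : V | T u = u} = ⊤ :=
    aux_span_fixed hq2 hq0 hσ (finrank F V) V rfl T hbij
  have hsetfix : {u : V | T u = u} = {u : V | τ u = u} := rfl
  -- basis of V made of fixed vectors
  obtain ⟨b, hbsub, hbspan, hbind⟩ := exists_linearIndependent F {u : V | τ u = u}
  have hbspan' : ⊤ ≤ span F (Set.range ((↑) : b → V)) := by
    rw [Subtype.range_coe, hbspan, ← hsetfix, hspan]
  let B : Basis b F V := Basis.mk hbind hbspan'
  haveI : Fintype b := FiniteDimensional.fintypeBasisIndex B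
  have hBapp : ∀ i : b, B i = (i : V) := fun i => Basis.mk_apply _ _ _
  have hfixb : ∀ i : b, τ (i : V) = (i : V) := fun i => hbsub i.2
  -- the corresponding family in Vτ
  have hmemVτ : ∀ i : b, (i : V) ∈ Vτ := fun i => (hVτ _).mpr (hfixb i)
  set ε : b → Vτ := fun i => ⟨(i : V), hmemVτ i⟩ with hε
  -- linear independence over K
  have hindK : LinearIndependent K ε := by
    have h1 : LinearIndependent F ((↑) : b → V) := hbind
    have h2 : LinearIndependent K ((↑) : b → V) := by
      refine h1.restrict_scalars ?_
      have : (fun r : K => r • (1 : F)) = algebraMap K F := by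
        funext r
        rw [Algebra.smul_def, mul_one]
      rw [this]
      exact (algebraMap K F).injective
    have h3 : (⇑Vτ.subtype ∘ ε) = ((↑) : b → V) := rfl
    rw [← h3] at h2
    exact LinearIndependent.of_comp Vτ.subtype h2
  -- spanning over K
  have hspanK : ⊤ ≤ span K (Set.range ε) := by
    intro y _
    have hyfix : τ (y : V) = (y : V) := (hVτ _).mp y.2
    set c : b → F := fun i => B.repr (y : V) i with hc
    have hrepr : ∑ i, c i • (i : V) = (y : V) := by
      have := B.sum_repr (y : V)
      simpa [hBapp] using this
    have happly : τ (y : V) = ∑ i, (c i) ^ q • (i : V) := by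
      have h1 : τ (y : V) = T (∑ i, c i • (i : V)) := by rw [hrepr]; rfl
      rw [h1, map_sum]
      refine Finset.sum_congr rfl fun i _ => ?_
      rw [LinearMap.map_smulₛₗ, hσ, hTapp, hfixb]
    have hcoeff : ∀ i : b, (c i) ^ q = c i := by
      have h2 : ∑ j, (c j) ^ q • B j = ∑ j, c j • B j := by
        simp only [hBapp]
        rw [← happly, hyfix, hrepr]
      have h4 : ⇑(B.repr (∑ j, (c j) ^ q • B j)) = ⇑(B.repr (∑ j, c j • B j)) := by rw [h2]
      rw [Basis.repr_sum_self, Basis.repr_sum_self] at h4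
      exact fun i => congrFun h4 i
    choose d hd using fun i : b => aux_mem_range hq2 hKcard (hcoeff i)
    have hyd : y = ∑ i, d i • ε i := by
      apply Subtype.ext
      push_cast
      rw [← hrepr]
      refine Finset.sum_congr rfl fun i _ => ?_
      rw [← hd i, ← IsScalarTower.algebraMap_smul F (d i) ((i : b) : V)]
    rw [hyd]
    exact Submodule.sum_mem _ fun i _ =>
      Submodule.smul_mem _ _ (subset_span (Set.mem_range_self i))
  let BK : Basis b K Vτ := Basis.mk hindK hspanK
  haveI : Module.Finite K ↥Vτ := Module.Finite.of_basis BK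
  -- finrank equality
  have hrk : finrank K ↥Vτ = finrank F V := by
    rw [Module.finrank_eq_card_basis BK, Module.finrank_eq_card_basis B]
  refine ⟨part1, ?_, hrk⟩
  -- bijectivity of μ
  have hsurj : Function.Surjective μ := by
    rw [← LinearMap.range_eq_top, eq_top_iff, ← hspan, Submodule.span_le]
    intro w hw
    exact ⟨(1 : F) ⊗ₜ ⟨w, (hVτ w).mpr hw⟩, by rw [hμ, one_smul]⟩
  have hdim : finrank F (F ⊗[K] ↥Vτ) = finrank F V := by
    rw [Module.finrank_baseChange, hrk]
  exact ⟨(LinearMap.injective_iff_surjective_of_finrank_eq_finrank hdim).mpr hsurj, hsurj⟩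
end
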